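/- arXiv:1601.01673 — 9 statements merged into one kernel-verified Lean document; each statement's English description precedes it below -/
import Mathlib

section
/- For every positive integer j, ζ(2j) = (-1)^{j+1} [ j π^{2j} / (2j+1)! + Σ_{k=1}^{j-1} (-1)^k π^{2j-2k} ζ(2k) / (2j-2k+1)! ], where ζ is the Riemann zeta function. -/
open Finset Real

section Aux
open Nat Finset.Nat PowerSeries

lemma key_ps : rescale (2:ℚ) (bernoulliPowerSeries ℚ) * (exp ℚ + 1) = C (2:ℚ) * bernoulliPowerSeries ℚ := by
  have h := bernoulliPowerSeries_mul_exp_sub_one ℚ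
  have h2 := congrArg (rescale (2:ℚ)) h
  have he : rescale (2:ℚ) (exp ℚ) = (exp ℚ)^2 := by
    rw [exp_pow_eq_rescale_exp]; norm_num
  rw [map_mul, map_sub, map_one, rescale_X, he] at h2
  have hfac : (exp ℚ)^2 - 1 = (exp ℚ + 1) * (exp ℚ - 1) := by ring
  have hne : exp ℚ - 1 ≠ 0 := by
    intro hzero
    have := congrArg (coeff 1) hzero
    simp [coeff_exp] at this
  have : (rescale (2:ℚ) (bernoulliPowerSeries ℚ) * (exp ℚ + 1)) * (exp ℚ - 1)
      = (C (2:ℚ) * bernoulliPowerSeries ℚ) * (exp ℚ - 1) := by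
    rw [mul_assoc, ← hfac, h2, ← h, mul_assoc]
  exact mul_right_cancel₀ hne this

lemma bern_sum (n : ℕ) :
    ∑ k ∈ range (n+1), (n.choose k : ℚ) * 2^k * bernoulli k = (2 - 2^n) * bernoulli n := by
  have h := congrArg (coeff n) key_ps
  rw [coeff_mul, coeff_C_mul, sum_antidiagonal_eq_sum_range_succ_mk] at h
  simp only [coeff_rescale, bernoulliPowerSeries, coeff_mk, map_add, coeff_exp, coeff_one,
    Algebra.algebraMap_self, RingHom.id_apply] at h
  have hsplit : ∑ x ∈ range (n+1), 2^x * (bernoulli x / x !) * (1/((n-x)! : ℚ) + if n - x = 0 then 1 else 0)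
      = (∑ x ∈ range (n+1), 2^x * (bernoulli x / x !) * (1/((n-x)! : ℚ))) + 2^n * (bernoulli n / n !) := by
    simp_rw [mul_add, sum_add_distrib]
    congr 1
    rw [Finset.sum_eq_single n]
    · simp
    · intro x hx hxn
      have : n - x ≠ 0 := by
        have := mem_range.mp hx
        omega
      simp [this]
    · intro hn
      exact absurd (self_mem_range_succ n) hn
  have h2 : (∑ x ∈ range (n+1), 2^x * (bernoulli x / x !) * (1/((n-x)! : ℚ)))
      = 2 * (bernoulli n / n !) - 2^n * (bernoulli n / n !) := by
    have := hsplit.symm.trans h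
    linarith
  have hfac : ∀ k : ℕ, ((k)! : ℚ) ≠ 0 := fun k => by exact_mod_cast (Nat.factorial_pos k).ne'
  calc ∑ k ∈ range (n+1), (n.choose k : ℚ) * 2^k * bernoulli k
      = ∑ k ∈ range (n+1), (n ! : ℚ) * (2^k * (bernoulli k / k !) * (1/((n-k)! : ℚ))) := by
        refine sum_congr rfl fun k hk => ?_
        rw [Nat.cast_choose ℚ (le_of_lt_succ (mem_range.mp hk))]
        field_simp
    _ = (n ! : ℚ) * ∑ k ∈ range (n+1), 2^k * (bernoulli k / k !) * (1/((n-k)! : ℚ)) := by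
        rw [mul_sum]
    _ = (n ! : ℚ) * (2 * (bernoulli n / n !) - 2^n * (bernoulli n / n !)) := by rw [h2]
    _ = (2 - 2^n) * bernoulli n := by
        field_simp

lemma sum_range_double (f : ℕ → ℚ) : ∀ m, ∑ k ∈ range (2*m), f k = ∑ i ∈ range m, (f (2*i) + f (2*i+1))
  | 0 => by simp
  | (m+1) => by
    rw [show 2*(m+1) = (2*m)+1+1 by ring, sum_range_succ, sum_range_succ,
      sum_range_double f m, sum_range_succ]
    ring

lemma bernoulli_odd_zero {m : ℕ} (hm : 0 < m) : bernoulli (2*m+1) = 0 := by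
  rw [bernoulli_eq_bernoulli'_of_ne_one (by omega)]
  exact bernoulli'_eq_zero_of_odd ⟨m, by ring⟩ (by omega)

lemma lemA (j : ℕ) (hj : 0 < j) :
    ∑ i ∈ Ico 1 (j+1), ((2*j+1).choose (2*i) : ℚ) * 2^(2*i) * bernoulli (2*i) = 2*j := by
  have h := bern_sum (2*j+1)
  rw [bernoulli_odd_zero hj, mul_zero] at h
  rw [show 2*j+1+1 = 2*(j+1) by ring,
    sum_range_double (fun k => (((2*j+1).choose k : ℚ)) * 2^k * bernoulli k) (j+1),
    Finset.sum_range_succ'] at h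
  norm_num [bernoulli_one] at h
  have hodd : ∀ i ∈ range j, (((2*j+1).choose (2*(i+1)+1) : ℚ)) * 2^(2*(i+1)+1) * bernoulli (2*(i+1)+1) = 0 := by
    intro i _
    rw [bernoulli_odd_zero (Nat.succ_pos i), mul_zero]
  rw [Finset.sum_Ico_eq_sum_range]
  norm_num
  have heq : ∀ i ∈ range j, ((2*j+1).choose (2*(1+i)) : ℚ) * 2^(2*(1+i)) * bernoulli (2*(1+i))
      = (((2*j+1).choose (2*(i+1)) : ℚ)) * 2^(2*(i+1)) * bernoulli (2*(i+1)) + 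
        (((2*j+1).choose (2*(i+1)+1) : ℚ)) * 2^(2*(i+1)+1) * bernoulli (2*(i+1)+1) := by
    intro i hi
    rw [hodd i hi, add_zero, add_comm 1 i]
  rw [sum_congr rfl heq]
  have : (1 : ℚ) + ((2*j+1 : ℕ) : ℚ) * 2 * (-1/2) = -(2*j : ℚ) + 0 := by push_cast; ring
  linarith


lemma lemB (j : ℕ) (hj : 0 < j) :
    ∑ k ∈ Ico 1 (j+1), (2:ℂ)^(2*k-1) * (bernoulli (2*k) : ℚ) / (((2*k)! : ℂ) * ((2*j-2*k+1)! : ℂ))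
      = (j : ℂ) / (((2*j+1)! : ℕ) : ℂ) := by
  have hA := lemA j hj
  have hC : ∑ i ∈ Ico 1 (j+1), (((2*j+1).choose (2*i) : ℂ)) * 2^(2*i) * ((bernoulli (2*i) : ℚ) : ℂ)
      = 2 * (j : ℂ) := by
    have := congrArg (fun q : ℚ => (q : ℂ)) hA
    push_cast at this
    convert this using 2
  have hterm : ∀ k ∈ Ico 1 (j+1), (((2*j+1).choose (2*k) : ℂ)) * 2^(2*k) * ((bernoulli (2*k) : ℚ) : ℂ)
      = ((((2*j+1)! : ℕ) : ℂ) * 2) *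
        ((2:ℂ)^(2*k-1) * (bernoulli (2*k) : ℚ) / (((2*k)! : ℂ) * ((2*j-2*k+1)! : ℂ))) := by
    intro k hk
    obtain ⟨h1, h2⟩ := mem_Ico.mp hk
    have hle : 2*k ≤ 2*j+1 := by omega
    rw [Nat.cast_choose ℂ hle, show 2*j+1-2*k = 2*j-2*k+1 by omega,
        show (2:ℂ)^(2*k) = 2 * 2^(2*k-1) by
          have h21 : 2*k - 1 + 1 = 2*k := by omega
          conv_lhs => rw [← h21]
          rw [pow_succ]; ring]
    have f1 : (((2*k)! : ℕ) : ℂ) ≠ 0 := Nat.cast_ne_zero.mpr (Nat.factorial_pos _).ne'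
    have f2 : (((2*j-2*k+1)! : ℕ) : ℂ) ≠ 0 := Nat.cast_ne_zero.mpr (Nat.factorial_pos _).ne'
    field_simp
  rw [sum_congr rfl hterm, ← mul_sum] at hC
  have hne : ((((2*j+1)! : ℕ) : ℂ) * 2) ≠ 0 :=
    mul_ne_zero (Nat.cast_ne_zero.mpr (Nat.factorial_pos _).ne') two_ne_zero
  have hfne : (((2*j+1)! : ℕ) : ℂ) ≠ 0 := Nat.cast_ne_zero.mpr (Nat.factorial_pos _).ne'
  field_simp at hC ⊢
  linear_combination hC

end Aux

open Nat in
theorem lettington_zeta_identity (j : ℕ) (hj : 0 < j) :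
    riemannZeta (2 * j) =
      (-1 : ℂ) ^ (j + 1) *
        ((j : ℂ) * (π : ℂ) ^ (2 * j) / (Nat.factorial (2 * j + 1) : ℂ) +
          ∑ k ∈ Finset.Ico 1 j,
            (-1 : ℂ) ^ k * (π : ℂ) ^ (2 * j - 2 * k) * riemannZeta (2 * k) /
              (Nat.factorial (2 * j - 2 * k + 1) : ℂ)) := by
  have hB := lemB j hj
  rw [Finset.sum_Ico_succ_top (by omega : 1 ≤ j)] at hB
  have hSj : (2:ℂ)^(2*j-1) * ((bernoulli (2*j) : ℚ) : ℂ) / (((2*j)! : ℂ) * ((2*j-2*j+1)! : ℂ))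
      = 2^(2*j-1) * ((bernoulli (2*j) : ℚ) : ℂ) / ((2*j)! : ℂ) := by
    rw [show 2*j-2*j+1 = 1 by omega]
    norm_num [Nat.factorial]
  rw [hSj] at hB
  have hS : ∑ k ∈ Ico 1 j, (2:ℂ)^(2*k-1) * ((bernoulli (2*k) : ℚ) : ℂ) / (((2*k)! : ℂ) * ((2*j-2*k+1)! : ℂ))
      = (j : ℂ) / (((2*j+1)! : ℕ) : ℂ) - 2^(2*j-1) * ((bernoulli (2*j) : ℚ) : ℂ) / ((2*j)! : ℂ) :=
    eq_sub_of_add_eq hB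
  have hz : ∀ k ∈ Ico 1 j,
      (-1 : ℂ) ^ k * (π : ℂ) ^ (2 * j - 2 * k) * riemannZeta (2 * k) /
          (Nat.factorial (2 * j - 2 * k + 1) : ℂ)
        = (π:ℂ)^(2*j) * -((2:ℂ)^(2*k-1) * ((bernoulli (2*k) : ℚ) : ℂ) / (((2*k)! : ℂ) * ((2*j-2*k+1)! : ℂ))) := by
    intro k hk
    obtain ⟨h1, h2⟩ := mem_Ico.mp hk
    rw [riemannZeta_two_mul_nat (by omega : k ≠ 0)]
    have hpi : (π:ℂ)^(2*j-2*k) * (π:ℂ)^(2*k) = (π:ℂ)^(2*j) := by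
      rw [← pow_add]; congr 1; omega
    have hsgn : (-1:ℂ)^k * (-1:ℂ)^(k+1) = -1 := by
      rw [← pow_add]; exact Odd.neg_one_pow ⟨k, by ring⟩
    calc (-1 : ℂ) ^ k * (π : ℂ) ^ (2 * j - 2 * k) *
          ((-1) ^ (k + 1) * 2 ^ (2 * k - 1) * (π:ℂ) ^ (2 * k) * ((bernoulli (2 * k) : ℚ) : ℂ) / ((2 * k)! : ℂ)) /
          ((2 * j - 2 * k + 1)! : ℂ)
        = ((-1:ℂ)^k * (-1:ℂ)^(k+1)) * (((π:ℂ)^(2*j-2*k) * (π:ℂ)^(2*k)) *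
            ((2:ℂ)^(2*k-1) * ((bernoulli (2*k) : ℚ) : ℂ) / (((2*k)! : ℂ) * ((2*j-2*k+1)! : ℂ)))) := by
          ring
      _ = (π:ℂ)^(2*j) * -((2:ℂ)^(2*k-1) * ((bernoulli (2*k) : ℚ) : ℂ) / (((2*k)! : ℂ) * ((2*j-2*k+1)! : ℂ))) := by
          rw [hsgn, hpi]; ring
  rw [riemannZeta_two_mul_nat hj.ne', sum_congr rfl hz, ← mul_sum, Finset.sum_neg_distrib, hS]
  have f1 : (((2*j)! : ℕ) : ℂ) ≠ 0 := Nat.cast_ne_zero.mpr (Nat.factorial_pos _).ne'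
  have f2 : (((2*j+1)! : ℕ) : ℂ) ≠ 0 := Nat.cast_ne_zero.mpr (Nat.factorial_pos _).ne'
  field_simp
  ring
end

section
/- For every positive integer j, (3^{1-2j} - 1) ζ(2j) = (-1)^j j (2π)^{2j} / ((2j)! 3^{2j-1}) + (-1)^{j+1} (2π)^{2j} Σ_{m=0}^{j} (-1)^{m+1} ζ(2m) / ((2j-2m)! 2^{2m-1} 3^{2j-2m} π^{2m}). -/
open PowerSeries Finset

noncomputable def BF (t : ℚ) : PowerSeries ℚ :=
  PowerSeries.mk fun n => Polynomial.aeval t ((1 / n.factorial : ℚ) • Polynomial.bernoulli n)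

lemma BF_mul (t : ℚ) : BF t * (exp ℚ - 1) = PowerSeries.X * rescale t (exp ℚ) :=
  Polynomial.bernoulli_generating_function t

lemma exp_sub_one_ne_zero : (exp ℚ - 1) ≠ 0 := by
  intro h
  have := congrArg (PowerSeries.coeff 1) h
  simp [PowerSeries.coeff_exp] at this

lemma BF_reflect (t : ℚ) : BF (1 - t) = rescale (-1) (BF t) := by
  have hc : (exp ℚ - 1) ≠ 0 := exp_sub_one_ne_zero
  apply mul_right_cancel₀ hc
  rw [BF_mul]
  symm
  have h1 : rescale (-1 : ℚ) (BF t) * (rescale (-1) (exp ℚ) - 1) =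
      -(PowerSeries.X * rescale (-t) (exp ℚ)) := by
    have h := congrArg (rescale (-1 : ℚ)) (BF_mul t)
    rw [map_mul, map_mul, map_sub, map_one, rescale_X, rescale_rescale] at h
    rw [h]
    have ht : t * (-1 : ℚ) = -t := by ring
    rw [ht]
    have : (PowerSeries.C) (-1 : ℚ) = -1 := by simp
    rw [this]; ring
  have h2 : (1 - rescale (-1 : ℚ) (exp ℚ)) * exp ℚ = exp ℚ - 1 := by
    have h := exp_mul_exp_eq_exp_add (-1 : ℚ) 1
    rw [rescale_one] at h
    rw [sub_mul, one_mul]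
    simp only [RingHom.id_apply] at h
    rw [h]
    norm_num [rescale_zero]
  have h3 : rescale (-t : ℚ) (exp ℚ) * exp ℚ = rescale (1 - t) (exp ℚ) := by
    have h := exp_mul_exp_eq_exp_add (-t : ℚ) 1
    rw [rescale_one] at h
    simp only [RingHom.id_apply] at h
    rw [h]
    ring_nf
  calc rescale (-1 : ℚ) (BF t) * (exp ℚ - 1)
      = rescale (-1 : ℚ) (BF t) * ((1 - rescale (-1 : ℚ) (exp ℚ)) * exp ℚ) := by rw [h2]
    _ = -(rescale (-1 : ℚ) (BF t) * (rescale (-1) (exp ℚ) - 1)) * exp ℚ := by ring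
    _ = PowerSeries.X * rescale (-t) (exp ℚ) * exp ℚ := by rw [h1]; ring
    _ = PowerSeries.X * rescale (1 - t) (exp ℚ) := by rw [mul_assoc, h3]

lemma BF_mult3 : BF 0 + BF (3⁻¹) + BF (2/3) = (3 : ℚ) • rescale (3⁻¹) (BF 0) := by
  have hc : (exp ℚ - 1) ≠ 0 := exp_sub_one_ne_zero
  apply mul_right_cancel₀ hc
  set E := rescale (3⁻¹ : ℚ) (exp ℚ) with hE
  have hE2 : E * E = rescale (2/3 : ℚ) (exp ℚ) := by
    rw [hE, exp_mul_exp_eq_exp_add]; norm_num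
  have hE3 : E * E * E = exp ℚ := by
    rw [hE2, hE, exp_mul_exp_eq_exp_add]
    norm_num [rescale_one]
  have key : (exp ℚ - 1) = (E - 1) * (1 + E + E * E) := by
    have : (E - 1) * (1 + E + E * E) = E * E * E - 1 := by ring
    rw [this, hE3]
  have hr : rescale (3⁻¹ : ℚ) (BF 0) * (E - 1) = PowerSeries.C 3⁻¹ * PowerSeries.X := by
    have h := congrArg (rescale (3⁻¹ : ℚ)) (BF_mul 0)
    rw [map_mul, map_mul, map_sub, map_one, rescale_X, rescale_rescale] at h
    rw [← hE] at h
    rw [h]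
    norm_num [rescale_zero]
  have hsum : (BF 0 + BF 3⁻¹ + BF (2/3)) * (exp ℚ - 1)
      = PowerSeries.X * (1 + E + E * E) := by
    rw [add_mul, add_mul, BF_mul, BF_mul, BF_mul]
    rw [← hE, ← hE2]
    norm_num [rescale_zero]
    ring
  rw [hsum, smul_mul_assoc, key, ← mul_assoc, hr, PowerSeries.smul_eq_C_mul,
    ← mul_assoc, ← mul_assoc,
    show (PowerSeries.C (3:ℚ)) * (PowerSeries.C) (3⁻¹ : ℚ) = 1 from by rw [← map_mul]; norm_num,
    one_mul]

lemma bernoulli_eval_reflect (n : ℕ) (t : ℚ) :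
    (Polynomial.bernoulli n).eval (1 - t) = (-1 : ℚ) ^ n * (Polynomial.bernoulli n).eval t := by
  have h := congrArg (PowerSeries.coeff n) (BF_reflect t)
  simp only [BF, PowerSeries.coeff_mk, PowerSeries.coeff_rescale, map_smul,
    Polynomial.coe_aeval_eq_eval] at h
  have hnf : ((n.factorial : ℚ)) ≠ 0 := Nat.cast_ne_zero.2 n.factorial_ne_zero
  rw [smul_eq_mul, smul_eq_mul] at h
  field_simp at h
  linear_combination h

lemma bernoulli_eval_third (n : ℕ) :
    bernoulli n + (Polynomial.bernoulli n).eval (3⁻¹ : ℚ)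
      + (Polynomial.bernoulli n).eval (2/3 : ℚ) = 3 * (3⁻¹ : ℚ) ^ n * bernoulli n := by
  have h := congrArg (PowerSeries.coeff n) BF_mult3
  simp only [BF, map_add, PowerSeries.coeff_mk, PowerSeries.coeff_rescale, map_smul,
    Polynomial.coe_aeval_eq_eval, Polynomial.bernoulli_eval_zero, smul_eq_mul,
    PowerSeries.coeff_smul] at h
  have hnf : ((n.factorial : ℚ)) ≠ 0 := Nat.cast_ne_zero.2 n.factorial_ne_zero
  field_simp at h ⊢
  rw [← mul_left_inj' hnf]
  linear_combination (n.factorial : ℚ) * h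

lemma bernoulli_third_value (j : ℕ) :
    (Polynomial.bernoulli (2*j)).eval (3⁻¹ : ℚ)
      = (3 * (3⁻¹ : ℚ)^(2*j) - 1) * bernoulli (2*j) / 2 := by
  have h1 := bernoulli_eval_third (2*j)
  have h2 := bernoulli_eval_reflect (2*j) (3⁻¹ : ℚ)
  rw [show (1 - 3⁻¹ : ℚ) = 2/3 from by norm_num] at h2
  rw [show ((-1 : ℚ))^(2*j) = 1 from by rw [pow_mul]; norm_num, one_mul] at h2
  rw [h2] at h1
  linarith

lemma sum_range_even_odd {M : Type*} [AddCommMonoid M] (f : ℕ → M) (n : ℕ) :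
    ∑ i ∈ Finset.range (2*n+1), f i
      = ∑ m ∈ Finset.range (n+1), f (2*m) + ∑ m ∈ Finset.range n, f (2*m+1) := by
  induction n with
  | zero => simp
  | succ n ih =>
    calc ∑ i ∈ Finset.range (2*(n+1)+1), f i
        = ∑ i ∈ Finset.range (2*n+1), f i + f (2*n+1) + f (2*n+1+1) := by
          rw [show 2*(n+1)+1 = (2*n+1)+1+1 from by ring, Finset.sum_range_succ,
            Finset.sum_range_succ]
      _ = (∑ m ∈ Finset.range (n+1), f (2*m) + f (2*(n+1)))
            + (∑ m ∈ Finset.range n, f (2*m+1) + f (2*n+1)) := by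
          rw [ih, show 2*n+1+1 = 2*(n+1) from by ring]; abel
      _ = ∑ m ∈ Finset.range (n+1+1), f (2*m) + ∑ m ∈ Finset.range (n+1), f (2*m+1) := by
          rw [Finset.sum_range_succ (fun m => f (2*m)) (n+1),
            Finset.sum_range_succ (fun m => f (2*m+1)) n]

lemma bernoulli_third_expand (j : ℕ) (hj : 0 < j) :
    (Polynomial.bernoulli (2*j)).eval (3⁻¹ : ℚ)
      = -(j : ℚ) * (3⁻¹ : ℚ)^(2*j-1)
        + ∑ m ∈ Finset.range (j+1),
            bernoulli (2*m) * ((2*j).choose (2*m)) * (3⁻¹ : ℚ)^(2*j-2*m) := by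
  rw [Polynomial.bernoulli, Polynomial.eval_finset_sum]
  simp only [Polynomial.eval_monomial]
  rw [sum_range_even_odd (fun i => bernoulli i * ((2*j).choose i) * (3⁻¹ : ℚ)^(2*j-i)) j]
  rw [Finset.sum_eq_single_of_mem 0 (Finset.mem_range.2 hj)
    (by
      intro m _ hm
      have h1 : (2*m+1) ≠ 1 := by omega
      have : bernoulli (2*m+1) = 0 := by
        rw [bernoulli_eq_bernoulli'_of_ne_one h1]
        exact bernoulli'_eq_zero_of_odd ⟨m, by omega⟩ (by omega)
      simp [this])]
  rw [add_comm]
  congr 1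
  norm_num [bernoulli_one]
  ring

lemma key_q (j : ℕ) (hj : 0 < j) :
    ∑ m ∈ Finset.range (j+1), bernoulli (2*m) * ((2*j).choose (2*m)) * (3⁻¹ : ℚ)^(2*j-2*m)
      = (3 * (3⁻¹ : ℚ)^(2*j) - 1) * bernoulli (2*j) / 2 + (j : ℚ) * (3⁻¹ : ℚ)^(2*j-1) := by
  have h1 := bernoulli_third_value j
  have h2 := bernoulli_third_expand j hj
  linarith

open Real in
lemma term_eq (j m : ℕ) (hm : m ≤ j) :
    (-1 : ℂ) ^ (m + 1) * riemannZeta (2 * m) /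
        ((Nat.factorial (2 * j - 2 * m) : ℂ) * (2 : ℂ) ^ (2 * (m : ℤ) - 1) *
           3 ^ (2 * j - 2 * m) * (π : ℂ) ^ (2 * m))
      = ((bernoulli (2*m) * ((2*j).choose (2*m)) * (3⁻¹ : ℚ)^(2*j-2*m) : ℚ) : ℂ)
          / (Nat.factorial (2*j) : ℂ) := by
  have hπ : (π : ℂ) ≠ 0 := Complex.ofReal_ne_zero.mpr Real.pi_ne_zero
  have hf1 : ((Nat.factorial (2*j-2*m) : ℂ)) ≠ 0 := Nat.cast_ne_zero.2 (Nat.factorial_ne_zero _)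
  have hf2 : ((Nat.factorial (2*j) : ℂ)) ≠ 0 := Nat.cast_ne_zero.2 (Nat.factorial_ne_zero _)
  have hf3 : ((Nat.factorial (2*m) : ℂ)) ≠ 0 := Nat.cast_ne_zero.2 (Nat.factorial_ne_zero _)
  have hC : (((2*j).choose (2*m) : ℂ)) * (Nat.factorial (2*m) : ℂ)
      * (Nat.factorial (2*j-2*m) : ℂ) = (Nat.factorial (2*j) : ℂ) := by
    have := Nat.choose_mul_factorial_mul_factorial (by omega : 2*m ≤ 2*j)
    exact_mod_cast congrArg (Nat.cast : ℕ → ℂ) this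
  rcases Nat.eq_zero_or_pos m with hm0 | hm1
  · subst hm0
    simp only [Nat.cast_zero, mul_zero, riemannZeta_zero, Nat.mul_zero, Nat.sub_zero,
      pow_zero, mul_one, Nat.choose_zero_right, bernoulli_zero]
    rw [show ((0:ℤ) - 1) = (-1 : ℤ) from by norm_num, zpow_neg_one]
    push_cast
    field_simp
    rw [← mul_pow]; norm_num
  · have hm0 : m ≠ 0 := Nat.pos_iff_ne_zero.mp hm1
    rw [riemannZeta_two_mul_nat hm0]
    rw [show ((2 * (m:ℤ) - 1)) = ((2*m - 1 : ℕ) : ℤ) from by push_cast; omega, zpow_natCast]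
    have h2m : (2:ℂ)^(2*m-1) * 2 = 2^(2*m) := by
      rw [← pow_succ]
      congr 1
      omega
    field_simp
    have hs : ((-1:ℂ))^(m+1) * (-1:ℂ)^(m+1) = 1 := by
      rw [← pow_add, show (m+1)+(m+1) = 2*(m+1) from by ring, pow_mul]
      norm_num
    have h3 : ((1:ℂ)/3)^(2*j-2*m) * 3^(2*j-2*m) = 1 := by rw [← mul_pow]; norm_num
    push_cast
    linear_combination (((bernoulli (2*m) : ℚ) : ℂ) * ((2*j).factorial : ℂ)) * hs
      - ((bernoulli (2*m) : ℚ) : ℂ) * hC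
      - (((bernoulli (2*m) : ℚ) : ℂ) * (((2*j).choose (2*m) : ℕ) : ℂ) * ((2*m).factorial : ℂ)
          * ((2*j-2*m).factorial : ℂ)) * h3

open Finset Real

theorem zeta_identity_third (j : ℕ) (hj : 0 < j) :
    ((3 : ℂ) ^ ((1 : ℤ) - 2 * j) - 1) * riemannZeta (2 * j) =
      (-1 : ℂ) ^ j * (j : ℂ) * (2 * (π : ℂ)) ^ (2 * j) /
          ((Nat.factorial (2 * j) : ℂ) * 3 ^ (2 * j - 1)) +
        (-1 : ℂ) ^ (j + 1) * (2 * (π : ℂ)) ^ (2 * j) *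
          ∑ m ∈ Finset.range (j + 1),
            (-1 : ℂ) ^ (m + 1) * riemannZeta (2 * m) /
              ((Nat.factorial (2 * j - 2 * m) : ℂ) * (2 : ℂ) ^ (2 * (m : ℤ) - 1) *
                3 ^ (2 * j - 2 * m) * (π : ℂ) ^ (2 * m)) := by
  have hπ : (π : ℂ) ≠ 0 := Complex.ofReal_ne_zero.mpr Real.pi_ne_zero
  have hf2 : ((Nat.factorial (2*j) : ℂ)) ≠ 0 := Nat.cast_ne_zero.2 (Nat.factorial_ne_zero _)
  have hsum : (∑ m ∈ Finset.range (j + 1),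
      (-1 : ℂ) ^ (m + 1) * riemannZeta (2 * m) /
        ((Nat.factorial (2 * j - 2 * m) : ℂ) * (2 : ℂ) ^ (2 * (m : ℤ) - 1) *
          3 ^ (2 * j - 2 * m) * (π : ℂ) ^ (2 * m)))
      = ((∑ m ∈ Finset.range (j+1),
          bernoulli (2*m) * ((2*j).choose (2*m)) * (3⁻¹ : ℚ)^(2*j-2*m) : ℚ) : ℂ)
        / (Nat.factorial (2*j) : ℂ) := by
    rw [Finset.sum_congr rfl
      (fun m hm => term_eq j m (Nat.lt_succ_iff.mp (Finset.mem_range.mp hm)))]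
    rw [← Finset.sum_div]
    congr 1
    push_cast
    rfl
  rw [hsum, key_q j hj, riemannZeta_two_mul_nat (show j ≠ 0 by omega)]
  have hz : (3:ℂ) ^ ((1:ℤ) - 2*(j:ℤ)) = 3 / 3^(2*j) := by
    rw [zpow_sub₀ (by norm_num : (3:ℂ) ≠ 0), zpow_one,
      show ((2:ℤ)*(j:ℤ)) = ((2*j : ℕ) : ℤ) from by push_cast; ring, zpow_natCast]
  rw [hz]
  obtain ⟨k, rfl⟩ : ∃ k, j = k + 1 := ⟨j - 1, by omega⟩
  push_cast
  simp only [show 2*(k+1) - 1 = 2*k+1 from by omega, show 2*(k+1) = 2*k+2 from by omega,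
    show 2*k+2-1 = 2*k+1 from by omega]
  have hfne : ((Nat.factorial (2*k+2) : ℂ)) ≠ 0 := Nat.cast_ne_zero.2 (Nat.factorial_ne_zero _)
  rw [show ((3:ℂ)⁻¹)^(2*k+2) = ((3:ℂ)^(2*k+2))⁻¹ from inv_pow 3 (2*k+2),
    show ((3:ℂ)⁻¹)^(2*k+1) = ((3:ℂ)^(2*k+1))⁻¹ from inv_pow 3 (2*k+1)]
  field_simp
  ring
end

section
/- For every positive integer n, -(1/(2n)) (1 - 3^{1-2n})(2^{2n} - 1) B_{2n} = Σ_{m=0}^{n-1} C(2n-1, 2m) (E_{2m}/2^{2m}) (-1/6)^{2(n-m)-1}, where E_k = 2^k E_k(1/2) are the Euler numbers. -/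
open Finset

/-- The n-th Euler polynomial, via E_n(x) = (2/(n+1)) (B_{n+1}(x) - 2^{n+1} B_{n+1}(x/2)). -/
noncomputable def eulerPoly (n : ℕ) (x : ℚ) : ℚ :=
  (2 / (n + 1)) *
    ((Polynomial.bernoulli (n + 1)).eval x - 2 ^ (n + 1) * (Polynomial.bernoulli (n + 1)).eval (x / 2))

/-- The n-th Euler number E_n = 2^n E_n(1/2). -/
noncomputable def eulerNumber (n : ℕ) : ℚ := 2 ^ n * eulerPoly n (1 / 2)

section Helpers
open Polynomial

lemma key_zero (p q : ℚ[X]) (c : ℚ) (hc : c ≠ 0)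
    (hd : q.derivative = Polynomial.C c * p)
    (hper : ∀ x : ℚ, q.eval (x + 1) = q.eval x) : p = 0 := by
  have hq : q = Polynomial.C (q.eval 0) := by
    have hroots : ∀ k : ℕ, (q - Polynomial.C (q.eval 0)).IsRoot (k : ℚ) := by
      intro k
      induction k with
      | zero => simp [Polynomial.IsRoot]
      | succ k ih =>
        have := hper (k : ℚ)
        simpa [Polynomial.IsRoot, Nat.cast_succ, this] using ih
    have hinf : Set.Infinite {x : ℚ | (q - Polynomial.C (q.eval 0)).IsRoot x} := by
      apply Set.Infinite.mono (s := Set.range ((↑) : ℕ → ℚ))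
      · rintro x ⟨k, rfl⟩; exact hroots k
      · exact Set.infinite_range_of_injective Nat.cast_injective
    have := Polynomial.eq_zero_of_infinite_isRoot _ hinf
    linear_combination (norm := ring_nf) this
  have : Polynomial.C c * p = 0 := by rw [← hd, hq]; simp
  rcases mul_eq_zero.1 this with h | h
  · exact absurd (Polynomial.C_eq_zero.1 h) hc
  · exact h

noncomputable def symP (n : ℕ) : ℚ[X] :=
  Polynomial.C ((-1 : ℚ) ^ n) * (Polynomial.bernoulli n).comp (Polynomial.C 1 - Polynomial.X)
    - Polynomial.bernoulli n

lemma symP_eq_zero (n : ℕ) : symP n = 0 := by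
  apply key_zero _ (symP (n + 1)) ((n : ℚ) + 1) (by positivity)
  · have hdc : Polynomial.derivative ((Polynomial.bernoulli (n+1)).comp (Polynomial.C 1 - Polynomial.X))
        = -(((n : ℚ[X]) + 1) * (Polynomial.bernoulli n).comp (Polynomial.C 1 - Polynomial.X)) := by
      rw [Polynomial.derivative_comp, Polynomial.derivative_bernoulli_add_one]
      simp only [Polynomial.mul_comp, Polynomial.natCast_comp, Polynomial.add_comp,
        Polynomial.one_comp, derivative_sub, derivative_C, derivative_X, zero_sub]
      push_cast
      ring
    simp only [symP, derivative_sub, Polynomial.derivative_C_mul, hdc,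
      Polynomial.derivative_bernoulli_add_one]
    simp only [pow_succ, map_mul, map_neg, map_one, map_add, Polynomial.C_eq_natCast]
    push_cast
    ring
  · intro x
    have hsq : ((-1 : ℚ) ^ n) * ((-1 : ℚ) ^ n) = 1 := by
      rw [← pow_add]; exact Even.neg_one_pow ⟨n, rfl⟩
    simp only [symP, eval_sub, eval_mul, eval_C, eval_comp, eval_sub, eval_one, eval_X]
    have h2 : (Polynomial.bernoulli (n+1)).eval (x + 1) =
        (Polynomial.bernoulli (n+1)).eval x + ((n:ℚ)+1) * x ^ n := by
      have := Polynomial.bernoulli_eval_one_add (n+1) x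
      simpa [add_comm] using this
    have h3 : (Polynomial.bernoulli (n+1)).eval (1 - x) =
        (Polynomial.bernoulli (n+1)).eval (-x) + ((n:ℚ)+1) * (-x) ^ n := by
      have := Polynomial.bernoulli_eval_one_add (n+1) (-x)
      simpa [sub_eq_add_neg] using this
    have e : (1 : ℚ) - (x + 1) = -x := by ring
    rw [e, h2, h3, neg_pow, pow_succ]
    linear_combination ((n:ℚ)+1) * x^n * hsq

lemma bernoulli_symm (n : ℕ) (x : ℚ) :
    (Polynomial.bernoulli n).eval (1 - x) = (-1 : ℚ) ^ n * (Polynomial.bernoulli n).eval x := by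
  have hsq : ((-1 : ℚ) ^ n) * ((-1 : ℚ) ^ n) = 1 := by
    rw [← pow_add]; exact Even.neg_one_pow ⟨n, rfl⟩
  have h := congrArg (Polynomial.eval x) (symP_eq_zero n)
  simp only [symP, eval_sub, eval_mul, eval_C, eval_comp, eval_sub, eval_one, eval_X,
    eval_zero] at h
  linear_combination ((-1:ℚ)^n) * h - (Polynomial.bernoulli n).eval (1-x) * hsq

noncomputable def mulP (m n : ℕ) : ℚ[X] :=
  Polynomial.C (m : ℚ) * Polynomial.bernoulli n -
    Polynomial.C ((m : ℚ) ^ n) * ∑ k ∈ Finset.range m,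
      (Polynomial.bernoulli n).comp (Polynomial.C ((m : ℚ)⁻¹) * (Polynomial.X + Polynomial.C (k : ℚ)))

lemma mulP_eq_zero (m n : ℕ) (hm : 0 < m) : mulP m n = 0 := by
  have hm0 : (m : ℚ) ≠ 0 := Nat.cast_ne_zero.2 hm.ne'
  have hv : Polynomial.C (m : ℚ) * Polynomial.C ((m : ℚ))⁻¹ = 1 := by
    rw [← map_mul, mul_inv_cancel₀ hm0, map_one]
  apply key_zero _ (mulP m (n + 1)) ((n : ℚ) + 1) (by positivity)
  · have hdc : ∀ k : ℕ, Polynomial.derivative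
        ((Polynomial.bernoulli (n+1)).comp (Polynomial.C ((m : ℚ)⁻¹) * (Polynomial.X + Polynomial.C (k : ℚ))))
        = Polynomial.C ((m : ℚ)⁻¹) * (((n : ℚ[X]) + 1) *
            (Polynomial.bernoulli n).comp (Polynomial.C ((m : ℚ)⁻¹) * (Polynomial.X + Polynomial.C (k : ℚ)))) := by
      intro k
      rw [Polynomial.derivative_comp, Polynomial.derivative_bernoulli_add_one]
      simp only [Polynomial.mul_comp, Polynomial.natCast_comp, Polynomial.add_comp,
        Polynomial.one_comp, derivative_mul, derivative_C, derivative_add, derivative_X, zero_mul,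
        zero_add, add_zero, mul_one]
    simp only [mulP, derivative_sub, Polynomial.derivative_C_mul,
      Polynomial.derivative_bernoulli_add_one, derivative_sum, hdc]
    have hterm : ∀ k : ℕ, Polynomial.C ((m:ℚ) ^ (n+1)) * (Polynomial.C ((m : ℚ))⁻¹ * (((n : ℚ[X]) + 1) *
          (Polynomial.bernoulli n).comp (Polynomial.C ((m : ℚ)⁻¹) * (Polynomial.X + Polynomial.C (k : ℚ)))))
        = Polynomial.C ((n:ℚ) + 1) * (Polynomial.C ((m:ℚ) ^ n) *
          (Polynomial.bernoulli n).comp (Polynomial.C ((m : ℚ)⁻¹) * (Polynomial.X + Polynomial.C (k : ℚ)))) := by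
      intro k
      have hv' : (m : ℚ[X]) * Polynomial.C ((m : ℚ))⁻¹ = 1 := by
        simpa only [Polynomial.C_eq_natCast] using hv
      simp only [map_pow, map_mul, map_add, map_one, Polynomial.C_eq_natCast, pow_succ]
      linear_combination (((n : ℚ[X]) + 1) *
        (Polynomial.bernoulli n).comp (Polynomial.C ((m : ℚ)⁻¹) * (Polynomial.X + (k : ℚ[X]))) *
        ((m : ℚ[X])) ^ n) * hv'
    rw [Finset.mul_sum]
    simp only [hterm]
    rw [mul_sub]
    congr 1
    · simp only [map_add, map_one, Polynomial.C_eq_natCast]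
      ring
    · rw [Finset.mul_sum, Finset.mul_sum]
  · intro x
    have h1 : ∀ y : ℚ, (Polynomial.bernoulli (n+1)).eval (y + 1) =
        (Polynomial.bernoulli (n+1)).eval y + ((n:ℚ)+1) * y ^ n := fun y => by
      have := Polynomial.bernoulli_eval_one_add (n+1) y
      simpa [add_comm] using this
    simp only [mulP, eval_sub, eval_mul, eval_C, eval_finset_sum, eval_comp, eval_add, eval_X]
    have tele : ∑ k ∈ Finset.range m,
        ((Polynomial.bernoulli (n+1)).eval ((m:ℚ)⁻¹ * (x + 1 + k)) -
         (Polynomial.bernoulli (n+1)).eval ((m:ℚ)⁻¹ * (x + k))) =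
        ((n:ℚ)+1) * ((m:ℚ)⁻¹ * x) ^ n := by
      have hts := Finset.sum_range_sub
        (fun k : ℕ => (Polynomial.bernoulli (n+1)).eval ((m:ℚ)⁻¹ * (x + k))) m
      simp only [Nat.cast_add, Nat.cast_one, Nat.cast_zero, add_zero] at hts
      have e1 : ∑ k ∈ Finset.range m,
          ((Polynomial.bernoulli (n+1)).eval ((m:ℚ)⁻¹ * (x + 1 + k)) -
           (Polynomial.bernoulli (n+1)).eval ((m:ℚ)⁻¹ * (x + k))) =
          ∑ k ∈ Finset.range m,
          ((Polynomial.bernoulli (n+1)).eval ((m:ℚ)⁻¹ * (x + ((k:ℚ) + 1))) -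
           (Polynomial.bernoulli (n+1)).eval ((m:ℚ)⁻¹ * (x + k))) := by
        refine Finset.sum_congr rfl fun k _ => ?_
        have e : (m:ℚ)⁻¹ * (x + 1 + k) = (m:ℚ)⁻¹ * (x + ((k:ℚ) + 1)) := by ring
        rw [e]
      rw [e1, hts]
      have hx : (m:ℚ)⁻¹ * (x + m) = (m:ℚ)⁻¹ * x + 1 := by field_simp
      rw [hx, h1 ((m:ℚ)⁻¹ * x)]
      ring
    have hmx : ((m:ℚ))^(n+1) * (((n:ℚ)+1) * ((m:ℚ)⁻¹ * x)^n) = (m:ℚ) * (((n:ℚ)+1) * x ^ n) := by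
      rw [mul_pow, inv_pow, pow_succ]
      field_simp
    rw [Finset.sum_sub_distrib] at tele
    rw [h1 x]
    linear_combination (-(m:ℚ)^(n+1)) * tele - hmx

noncomputable def addP (y : ℚ) (n : ℕ) : ℚ[X] :=
  (Polynomial.bernoulli n).comp (Polynomial.X + Polynomial.C y) -
    ∑ k ∈ Finset.range (n + 1),
      Polynomial.C ((n.choose k : ℚ) * y ^ (n - k)) * Polynomial.bernoulli k

lemma choose_cast (n j : ℕ) :
    ((n+1).choose (j+1) : ℚ) * ((j:ℚ)+1) = ((n:ℚ)+1) * (n.choose j : ℚ) := by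
  have := Nat.add_one_mul_choose_eq n j
  have h2 : ((Nat.succ n * n.choose j : ℕ) : ℚ) = (((n+1).choose (j+1) * (j+1) : ℕ) : ℚ) := by
    exact_mod_cast congrArg (Nat.cast (R := ℚ)) this
  push_cast at h2
  linarith [h2]

lemma addP_eq_zero (y : ℚ) (n : ℕ) : addP y n = 0 := by
  apply key_zero _ (addP y (n + 1)) ((n : ℚ) + 1) (by positivity)
  · have hdc : Polynomial.derivative ((Polynomial.bernoulli (n+1)).comp (Polynomial.X + Polynomial.C y))
        = ((n : ℚ[X]) + 1) * (Polynomial.bernoulli n).comp (Polynomial.X + Polynomial.C y) := by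
      rw [Polynomial.derivative_comp, Polynomial.derivative_bernoulli_add_one]
      simp only [Polynomial.mul_comp, Polynomial.natCast_comp, Polynomial.add_comp,
        Polynomial.one_comp, derivative_add, derivative_C, derivative_X, add_zero]
      push_cast
      ring
    simp only [addP, derivative_sub, hdc, derivative_sum, Polynomial.derivative_C_mul,
      Polynomial.derivative_bernoulli]
    rw [Finset.sum_range_succ']
    simp
    rw [mul_sub]
    congr 1
    rw [Finset.mul_sum]
    refine Finset.sum_congr rfl fun j _ => ?_
    have hcP := congrArg Polynomial.C (choose_cast n j)
    simp only [map_mul, map_add, map_one, Polynomial.C_eq_natCast] at hcP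
    linear_combination (Polynomial.C y ^ (n - j) * Polynomial.bernoulli j) * hcP
  · intro x
    have hB : ∀ (k : ℕ) (z : ℚ), (Polynomial.bernoulli k).eval (z + 1) =
        (Polynomial.bernoulli k).eval z + k * z ^ (k - 1) := fun k z => by
      have := Polynomial.bernoulli_eval_one_add k z
      simpa [add_comm] using this
    simp only [addP, eval_sub, eval_comp, eval_add, eval_X, eval_C, eval_finset_sum, eval_mul]
    have e : x + 1 + y = (x + y) + 1 := by ring
    rw [e, hB (n+1) (x+y)]
    simp only [Nat.add_sub_cancel]
    have hpow : ∑ k ∈ Finset.range (n+1+1),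
        ((n+1).choose k : ℚ) * y^(n+1-k) * ((k:ℚ) * x^(k-1)) = ((n:ℚ)+1) * (x+y)^n := by
      rw [Finset.sum_range_succ']
      simp
      rw [add_pow, Finset.mul_sum]
      refine Finset.sum_congr rfl fun j _ => ?_
      linear_combination (x^j * y^(n-j)) * choose_cast n j
    have hshift : ∑ k ∈ Finset.range (n + 1 + 1),
        ((n+1).choose k : ℚ) * y ^ (n + 1 - k) * (Polynomial.bernoulli k).eval (x+1)
        = ∑ k ∈ Finset.range (n + 1 + 1),
          ((n+1).choose k : ℚ) * y ^ (n + 1 - k) * (Polynomial.bernoulli k).eval x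
          + ((n:ℚ)+1) * (x + y)^n := by
      simp only [hB, mul_add]
      rw [Finset.sum_add_distrib, hpow]
    rw [hshift]
    push_cast
    ring

lemma mul_thm (m n : ℕ) (hm : 0 < m) (x : ℚ) :
    (m : ℚ) * (Polynomial.bernoulli n).eval x =
      (m : ℚ) ^ n * ∑ k ∈ Finset.range m, (Polynomial.bernoulli n).eval ((m : ℚ)⁻¹ * (x + k)) := by
  have h := congrArg (Polynomial.eval x) (mulP_eq_zero m n hm)
  simp only [mulP, eval_sub, eval_mul, eval_C, eval_finset_sum, eval_comp, eval_add, eval_X,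
    eval_zero] at h
  linarith [h]

lemma add_thm (n : ℕ) (x y : ℚ) :
    (Polynomial.bernoulli n).eval (x + y) =
      ∑ k ∈ Finset.range (n + 1), (n.choose k : ℚ) * y ^ (n - k) * (Polynomial.bernoulli k).eval x := by
  have h := congrArg (Polynomial.eval x) (addP_eq_zero y n)
  simp only [addP, eval_sub, eval_mul, eval_C, eval_finset_sum, eval_comp, eval_add, eval_X,
    eval_zero] at h
  linarith [h]

lemma eulerD (n : ℕ) (x : ℚ) :
    (Polynomial.bernoulli (n + 1)).eval x - 2 ^ (n + 1) * (Polynomial.bernoulli (n + 1)).eval (x / 2)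
      = ((n : ℚ) + 1) / 2 * eulerPoly n x := by
  have hn : ((n : ℚ) + 1) ≠ 0 := by positivity
  rw [eulerPoly]
  field_simp

lemma euler_add (n : ℕ) (x y : ℚ) :
    eulerPoly n (x + y) =
      ∑ k ∈ Finset.range (n + 1), (n.choose k : ℚ) * eulerPoly k x * y ^ (n - k) := by
  have hn : ((n : ℚ) + 1) ≠ 0 := by positivity
  have h1 := add_thm (n + 1) x y
  have h2 := add_thm (n + 1) (x / 2) (y / 2)
  have e : (x + y) / 2 = x / 2 + y / 2 := by ring
  have key : (Polynomial.bernoulli (n+1)).eval (x+y)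
      - 2 ^ (n+1) * (Polynomial.bernoulli (n+1)).eval ((x+y)/2)
      = ∑ k ∈ Finset.range (n + 2), ((n+1).choose k : ℚ) * y ^ (n + 1 - k) *
          ((Polynomial.bernoulli k).eval x - 2 ^ k * (Polynomial.bernoulli k).eval (x/2)) := by
    rw [h1, e, h2, Finset.mul_sum, ← Finset.sum_sub_distrib]
    refine Finset.sum_congr rfl fun k hk => ?_
    have hk' : k ≤ n + 1 := by
      have := Finset.mem_range.1 hk; omega
    have hp : (2:ℚ) ^ (n+1) * (y/2) ^ (n+1-k) = 2 ^ k * y ^ (n+1-k) := by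
      rw [div_pow, show n + 1 = k + (n + 1 - k) from by omega, pow_add, Nat.add_sub_cancel_left]
      field_simp
    linear_combination (-(((n+1).choose k : ℚ)) * (Polynomial.bernoulli k).eval (x/2)) * hp
  rw [eulerPoly, key, Finset.sum_range_succ']
  simp only [Nat.choose_zero_right, Nat.cast_one, one_mul, Nat.sub_zero, pow_zero,
    Polynomial.bernoulli_zero, Polynomial.eval_one, Nat.succ_sub_succ_eq_sub, mul_one, sub_self,
    mul_zero, add_zero]
  simp only [eulerD]
  rw [Finset.mul_sum]
  refine Finset.sum_congr rfl fun j _ => ?_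
  have hc := choose_cast n j
  field_simp
  linear_combination (y^(n-j) * eulerPoly j x) * hc

lemma euler_odd {k : ℕ} (hk : Odd k) : eulerPoly k (1 / 2) = 0 := by
  have h2 := mul_thm 2 (k+1) (by norm_num) (1/2)
  rw [Finset.sum_range_succ, Finset.sum_range_one] at h2
  norm_num at h2
  have hsym := bernoulli_symm (k+1) (1/4)
  have hev : (-1 : ℚ) ^ (k+1) = 1 := Even.neg_one_pow (Odd.add_one hk)
  rw [hev, one_mul] at hsym
  norm_num at hsym
  -- hsym : eval (3/4) = eval (1/4)
  rw [eulerPoly]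
  have : ((1:ℚ)/2)/2 = 1/4 := by norm_num
  rw [this]
  have : (Polynomial.bernoulli (k+1)).eval (1/2) = 2^(k+1) * (Polynomial.bernoulli (k+1)).eval (1/4) := by
    rw [hsym] at h2
    linarith
  rw [this]
  ring

lemma sum_range_two_mul (n : ℕ) (f : ℕ → ℚ) :
    ∑ k ∈ Finset.range (2 * n), f k = ∑ i ∈ Finset.range n, (f (2*i) + f (2*i+1)) := by
  induction n with
  | zero => simp
  | succ n ih =>
    rw [show 2 * (n+1) = 2*n + 1 + 1 from by omega, Finset.sum_range_succ, Finset.sum_range_succ,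
      Finset.sum_range_succ, ih]
    ring


end Helpers

theorem euler_bernoulli_sum (n : ℕ) (hn : 0 < n) :
    -(1 / (2 * n : ℚ)) * (1 - (3 : ℚ) ^ ((1 : ℤ) - 2 * n)) * (2 ^ (2 * n) - 1) * bernoulli (2 * n) =
      ∑ m ∈ Finset.range n,
        (Nat.choose (2 * n - 1) (2 * m) : ℚ) * (eulerNumber (2 * m) / 2 ^ (2 * m)) *
          (-1 / 6 : ℚ) ^ (2 * (n - m) - 1) := by
  set N := 2 * n - 1 with hN
  have hN1 : N + 1 = 2 * n := by omega
  have hn0 : ((n : ℚ)) ≠ 0 := Nat.cast_ne_zero.2 hn.ne'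
  have hc : ((N : ℚ) + 1) = 2 * (n : ℚ) := by exact_mod_cast congrArg (Nat.cast (R := ℚ)) hN1
  have hev : (-1 : ℚ) ^ (2 * n) = 1 := Even.neg_one_pow ⟨n, by omega⟩
  have hsym23 : (Polynomial.bernoulli (2*n)).eval (2/3) = (Polynomial.bernoulli (2*n)).eval (1/3) := by
    have := bernoulli_symm (2*n) (1/3)
    rw [hev, one_mul] at this
    norm_num at this
    exact this
  have h3 := mul_thm 3 (2*n) (by norm_num) 0
  rw [Finset.sum_range_succ, Finset.sum_range_succ, Finset.sum_range_one] at h3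
  norm_num at h3
  rw [hsym23] at h3
  have h2 := mul_thm 2 (2*n) (by norm_num) (1/3)
  rw [Finset.sum_range_succ, Finset.sum_range_one] at h2
  norm_num at h2
  rw [hsym23] at h2
  have heval : eulerPoly N (1/3) = (1/(n:ℚ)) * ((Polynomial.bernoulli (2*n)).eval (1/3)
        - 2^(2*n) * (Polynomial.bernoulli (2*n)).eval (1/6)) := by
    rw [eulerPoly, hN1, hc, show ((1:ℚ)/3)/2 = 1/6 from by norm_num]
    field_simp
  have hz : (3:ℚ) ^ ((1:ℤ) - 2*n) = 3 / 3^(2*n) := by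
    rw [zpow_sub₀ (by norm_num : (3:ℚ) ≠ 0), zpow_one]
    congr 1
  have hL : -(1 / (2 * n : ℚ)) * (1 - (3 : ℚ) ^ ((1 : ℤ) - 2 * n)) * (2 ^ (2 * n) - 1) * _root_.bernoulli (2 * n)
      = eulerPoly N (1/3) := by
    rw [heval, hz]
    have h39 : (3:ℚ)^(2*n) ≠ 0 := by positivity
    field_simp
    linear_combination ((2:ℚ)^(2*n)-1) * h3 + (-2*(3:ℚ)^(2*n)) * h2
  rw [hL]
  have hsum := euler_add N (1/2) (-1/6)
  rw [show (1:ℚ)/2 + (-1/6) = 1/3 from by norm_num] at hsum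
  rw [hsum, hN1, sum_range_two_mul]
  refine Finset.sum_congr rfl fun i hi => ?_
  have hio : i < n := Finset.mem_range.1 hi
  rw [euler_odd (⟨i, by omega⟩ : Odd (2*i+1))]
  have hexp : N - 2*i = 2*(n-i) - 1 := by omega
  rw [hexp, eulerNumber, mul_div_cancel_left₀ _ (pow_ne_zero _ (two_ne_zero (α := ℚ)))]
  ring
end

section
/- Gosper's identity: for every integer n ≥ 1, Σ_{i=0}^{n} [(1 - 2^{1-i})(1 - 2^{i-n+1}) / ((n-i)! i!)] B_{n-i} B_i = (1-n) B_n / n!. -/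
open Finset

namespace GosperAux

open PowerSeries

noncomputable def Cs : PowerSeries ℚ :=
  PowerSeries.mk fun n => ((2 : ℚ) ^ ((1 : ℤ) - n) - 1) * bernoulli n / n.factorial

noncomputable def Ds : PowerSeries ℚ :=
  PowerSeries.mk fun n => (1 - (n : ℚ)) * bernoulli n / n.factorial

lemma derivative_exp' : d⁄dX ℚ (exp ℚ) = exp ℚ := by
  ext n
  rw [PowerSeries.coeff_derivative, coeff_exp, coeff_exp]
  simp only [Algebra.algebraMap_self, RingHom.id_apply, Nat.factorial_succ]
  have h1 : ((n+1).factorial : ℚ) ≠ 0 := Nat.cast_ne_zero.mpr (Nat.factorial_ne_zero _)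
  have h2 : ((n).factorial : ℚ) ≠ 0 := Nat.cast_ne_zero.mpr (Nat.factorial_ne_zero _)
  rw [Nat.factorial_succ] at h1
  push_cast at h1 ⊢
  field_simp

lemma key : Cs * Cs = Ds := by
  set B := bernoulliPowerSeries ℚ with hBdef
  have hB : B * (exp ℚ - 1) = X := bernoulliPowerSeries_mul_exp_sub_one ℚ
  set E := rescale (1/2 : ℚ) (exp ℚ) with hEdef
  have hE : E * E = exp ℚ := by
    rw [hEdef, exp_mul_exp_eq_exp_add]
    norm_num [rescale_one]
  set rB := rescale (1/2 : ℚ) B with hrBdef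
  have hrB : rB * (E - 1) = PowerSeries.C (1/2) * X := by
    have h := congrArg (rescale (1/2 : ℚ)) hB
    rw [map_mul, map_sub, map_one, rescale_X] at h
    exact h
  have h2 : (PowerSeries.C (1/2 : ℚ)) * (PowerSeries.C (2 : ℚ)) = 1 := by
    rw [← map_mul]
    norm_num
  have hC : Cs = PowerSeries.C 2 * rB - B := by
    ext n
    simp only [Cs, coeff_mk, map_sub, coeff_C_mul, hrBdef, coeff_rescale, hBdef,
      bernoulliPowerSeries, coeff_mk, Algebra.algebraMap_self, RingHom.id_apply]
    have hz : (2 : ℚ) ^ ((1 : ℤ) - n) = 2 / 2 ^ n := by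
      rw [zpow_sub₀ (by norm_num : (2:ℚ) ≠ 0), zpow_one, zpow_natCast]
    rw [hz]
    have h2n : (2 : ℚ) ^ n ≠ 0 := pow_ne_zero _ (by norm_num)
    have hf : ((n.factorial : ℚ)) ≠ 0 := Nat.cast_ne_zero.mpr (Nat.factorial_ne_zero _)
    field_simp
    have h12 : ((1:ℚ)/2)^n * 2^n = 1 := by rw [← mul_pow]; norm_num
    linear_combination (-(bernoulli n * 2)) * h12
  have hCE : Cs * (exp ℚ - 1) = X * E := by
    linear_combination (exp ℚ - 1) * hC - hB - PowerSeries.C (2 : ℚ) * rB * hE +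
      PowerSeries.C (2 : ℚ) * (E + 1) * hrB + (E + 1) * X * h2
  have hDdef : Ds = B - X * (d⁄dX ℚ B) := by
    ext m
    cases m with
    | zero =>
      simp only [Ds, coeff_mk, map_sub, hBdef, bernoulliPowerSeries, coeff_mk,
        Algebra.algebraMap_self, RingHom.id_apply]
      simp [bernoulli_zero]
    | succ m =>
      simp only [Ds, coeff_mk, map_sub, coeff_succ_X_mul, PowerSeries.coeff_derivative,
        hBdef, bernoulliPowerSeries, coeff_mk, Algebra.algebraMap_self, RingHom.id_apply]
      push_cast
      ring
  have hd : B * exp ℚ + (exp ℚ - 1) * (d⁄dX ℚ B) = 1 := by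
    have h := congrArg (⇑(d⁄dX ℚ)) hB
    rw [Derivation.leibniz, map_sub, derivative_exp', Derivation.map_one_eq_zero,
      derivative_X, smul_eq_mul, smul_eq_mul, sub_zero] at h
    linear_combination h
  have hD : Ds * (exp ℚ - 1) ^ 2 = X ^ 2 * exp ℚ := by
    linear_combination (exp ℚ - 1) ^ 2 * hDdef + (exp ℚ - 1) * hB -
      X * (exp ℚ - 1) * hd + X * exp ℚ * hB
  have hne : (exp ℚ - 1) ^ 2 ≠ 0 := by
    apply pow_ne_zero
    intro h
    have := congrArg (coeff 1) h
    simp [coeff_exp] at this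
  apply mul_right_cancel₀ hne
  calc Cs * Cs * (exp ℚ - 1) ^ 2 = (Cs * (exp ℚ - 1)) * (Cs * (exp ℚ - 1)) := by ring
    _ = (X * E) * (X * E) := by rw [hCE]
    _ = X ^ 2 * (E * E) := by ring
    _ = X ^ 2 * exp ℚ := by rw [hE]
    _ = Ds * (exp ℚ - 1) ^ 2 := hD.symm

end GosperAux

theorem gosper_identity (n : ℕ) (hn : 1 ≤ n) :
    ∑ i ∈ Finset.range (n + 1),
        (1 - (2 : ℚ) ^ ((1 : ℤ) - i)) * (1 - (2 : ℚ) ^ ((i : ℤ) - n + 1)) /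
            ((Nat.factorial (n - i) : ℚ) * (Nat.factorial i : ℚ)) *
          bernoulli (n - i) * bernoulli i =
      (1 - (n : ℚ)) * bernoulli n / (Nat.factorial n : ℚ) := by
  have h := congrArg (PowerSeries.coeff n) GosperAux.key
  rw [PowerSeries.coeff_mul, Finset.Nat.sum_antidiagonal_eq_sum_range_succ_mk] at h
  simp only [GosperAux.Cs, GosperAux.Ds, PowerSeries.coeff_mk] at h
  rw [← h]
  apply Finset.sum_congr rfl
  intro k hk
  have hk' : k ≤ n := Nat.lt_succ_iff.mp (Finset.mem_range.mp hk)
  have hcast : ((n - k : ℕ) : ℤ) = (n : ℤ) - k := by omega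
  have hexp : ((k : ℤ) - n + 1) = (1 : ℤ) - ((n - k : ℕ) : ℤ) := by omega
  rw [hexp]
  ring
end

section
/- For every integer j ≥ 1, 2 Σ_{m=0}^{j} (1 - 2^{1-2m})(1 - 2^{2(m-j)+1}) ζ(2m) ζ(2j-2m) = -(1 - 2j) ζ(2j), where ζ(0) = -1/2. -/
open Finset Real

section AuxGosper
open PowerSeries

noncomputable abbrev PP : PowerSeries ℚ := bernoulliPowerSeries ℚ
noncomputable abbrev EE : PowerSeries ℚ := PowerSeries.exp ℚ

lemma d_exp : d⁄dX ℚ EE = EE := by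
  ext n
  simp [PowerSeries.coeff_derivative, PowerSeries.coeff_exp, Nat.factorial_succ]
  field_simp

lemma hP1 : PP * (EE - 1) = X := bernoulliPowerSeries_mul_exp_sub_one ℚ

lemma hPd : (d⁄dX ℚ PP) * (EE - 1) = 1 - PP * EE := by
  have h := congrArg (d⁄dX ℚ) hP1
  rw [Derivation.leibniz, PowerSeries.derivative_X] at h
  simp only [map_sub, d_exp, smul_eq_mul, map_one, Derivation.map_one_eq_zero, sub_zero] at h
  linear_combination h

lemma hE1ne : (EE - 1 : PowerSeries ℚ) ≠ 0 := by
  intro h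
  have := congrArg (PowerSeries.coeff 1) h
  simp [PowerSeries.coeff_exp] at this

lemma K1 : PP ^ 2 = (1 - X) * PP - X * (d⁄dX ℚ PP) := by
  have hne : ((EE - 1) ^ 2 : PowerSeries ℚ) ≠ 0 := pow_ne_zero _ hE1ne
  apply mul_left_cancel₀ hne
  linear_combination (PP * (EE - 1) + X - (1 - X) * (EE - 1) - X * EE) * hP1 +
    (X * (EE - 1)) * hPd

noncomputable abbrev QQ : PowerSeries ℚ := rescale (2:ℚ) PP

lemma hQ1 : QQ * (EE ^ 2 - 1) = 2 * X := by
  have h := congrArg (rescale (2:ℚ)) hP1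
  rw [map_mul, map_sub, map_one, rescale_X] at h
  rw [PowerSeries.exp_pow_eq_rescale_exp, Nat.cast_ofNat, h, map_ofNat]

lemma hEp1ne : (EE + 1 : PowerSeries ℚ) ≠ 0 := by
  intro h
  have := congrArg (PowerSeries.constantCoeff) h
  simp at this

lemma K2 : QQ * (PP + PowerSeries.C (1/2 : ℚ) * X) = PP ^ 2 := by
  have hne : ((EE - 1) ^ 2 * (EE + 1) : PowerSeries ℚ) ≠ 0 :=
    mul_ne_zero (pow_ne_zero _ hE1ne) hEp1ne
  apply mul_left_cancel₀ hne
  have hc : (PowerSeries.C (1/2 : ℚ) : PowerSeries ℚ) * 2 = 1 := by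
    rw [← map_ofNat (PowerSeries.C (R := ℚ)) 2, ← map_mul]; norm_num
  linear_combination ((EE-1)*(PP + PowerSeries.C (1/2 : ℚ) * X)) * hQ1 +
    (X^2*(EE-1)) * hc + (2*X - (EE+1)*(X + PP*(EE-1))) * hP1

noncomputable def bb (k : ℕ) : ℚ := bernoulli k / k.factorial

lemma coeff_PP (k : ℕ) : PowerSeries.coeff k PP = bb k := by
  simp [bernoulliPowerSeries, PowerSeries.coeff_mk, bb]

lemma Tfull (m : ℕ) :
    ∑ k ∈ range (m + 2), bb k * bb (m + 1 - k) =
      (1 - (m + 1 : ℚ)) * bb (m + 1) - bb m := by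
  have h := congrArg (PowerSeries.coeff (m + 1)) K1
  rw [pow_two, PowerSeries.coeff_mul,
    Finset.Nat.sum_antidiagonal_eq_sum_range_succ_mk] at h
  simp only [sub_mul, one_mul, map_sub, PowerSeries.coeff_succ_X_mul,
    PowerSeries.coeff_derivative, coeff_PP] at h
  rw [h]
  ring

lemma Ufull (m : ℕ) :
    ∑ k ∈ range (m + 2), 2 ^ k * bb k * bb (m + 1 - k) =
      ∑ k ∈ range (m + 2), bb k * bb (m + 1 - k) - 2 ^ m / 2 * bb m := by
  have h := congrArg (PowerSeries.coeff (m + 1)) K2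
  rw [mul_add, pow_two, ← mul_assoc QQ (PowerSeries.C (1/2 : ℚ)),
    mul_comm QQ (PowerSeries.C (1/2 : ℚ)), mul_assoc, mul_comm QQ X] at h
  rw [map_add, PowerSeries.coeff_C_mul, PowerSeries.coeff_succ_X_mul] at h
  rw [PowerSeries.coeff_mul, PowerSeries.coeff_mul,
    Finset.Nat.sum_antidiagonal_eq_sum_range_succ_mk,
    Finset.Nat.sum_antidiagonal_eq_sum_range_succ_mk] at h
  simp only [PowerSeries.coeff_rescale, coeff_PP] at h
  linear_combination h

lemma bb_odd {k : ℕ} (hk : Odd k) (h1 : 1 < k) : bb k = 0 := by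
  have : bernoulli k = 0 := by
    rw [bernoulli_eq_bernoulli'_of_ne_one (by omega)]
    exact bernoulli'_eq_zero_of_odd hk h1
  simp [bb, this]

lemma sum_even (N : ℕ) (f : ℕ → ℚ) (hf : ∀ k, Odd k → f k = 0) :
    ∑ k ∈ range (2 * N + 1), f k = ∑ m ∈ range (N + 1), f (2 * m) := by
  induction N with
  | zero => simp
  | succ N ih =>
    have h2 : 2 * (N + 1) + 1 = (2 * N + 1) + 1 + 1 := by ring
    rw [h2, sum_range_succ, sum_range_succ, ih, hf (2 * N + 1) ⟨N, by ring⟩,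
      add_zero, sum_range_succ (fun m => f (2 * m)) (N + 1),
      show 2 * (N + 1) = 2 * N + 2 from by ring]

lemma Tfull' (n : ℕ) (hn : 1 ≤ n) :
    ∑ k ∈ range (n + 1), bb k * bb (n - k) = (1 - (n : ℚ)) * bb n - bb (n - 1) := by
  obtain ⟨m, rfl⟩ : ∃ m, n = m + 1 := ⟨n - 1, by omega⟩
  have := Tfull m
  push_cast
  simpa using this

lemma Ufull' (n : ℕ) (hn : 1 ≤ n) :
    ∑ k ∈ range (n + 1), 2 ^ k * bb k * bb (n - k) =
      ∑ k ∈ range (n + 1), bb k * bb (n - k) - 2 ^ (n - 1) / 2 * bb (n - 1) := by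
  obtain ⟨m, rfl⟩ : ∃ m, n = m + 1 := ⟨n - 1, by omega⟩
  simpa using Ufull m

lemma bb_odd' {k : ℕ} (hk : Odd k) (h1 : 1 < k) : bb k = 0 := by
  have : bernoulli k = 0 := by
    rw [bernoulli_eq_bernoulli'_of_ne_one (by omega)]
    exact bernoulli'_eq_zero_of_odd hk h1
  simp [bb, this]

lemma Rj (j : ℕ) (hj : 1 ≤ j) :
    ∑ m ∈ range (j + 1), (4 ^ m - 2) * (4 ^ (j - m) - 2) * bb (2 * m) * bb (2 * (j - m)) =
      (1 - 2 * (j : ℚ)) * 4 ^ j * bb (2 * j) := by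
  rcases eq_or_lt_of_le hj with h1 | h2
  · rw [← h1]
    rw [show (0:ℕ)+1+1 = 2 from rfl, sum_range_succ, sum_range_succ, sum_range_zero]
    norm_num [bb, bernoulli_eq_bernoulli'_of_ne_one, bernoulli'_two]
  · have hb1 : bb (2 * j - 1) = 0 := bb_odd' ⟨j - 1, by omega⟩ (by omega)
    have hodd : ∀ k, Odd k → bb k * bb (2 * j - k) = 0 := by
      intro k hk
      rcases eq_or_ne k 1 with rfl | hne
      · rw [show 2 * j - 1 = 2 * j - 1 from rfl] at *
        rw [hb1, mul_zero]
      · rw [bb_odd' hk (by rcases hk with ⟨t, rfl⟩; omega), zero_mul]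
    have hT : ∑ k ∈ range (2 * j + 1), bb k * bb (2 * j - k) =
        (1 - 2 * (j : ℚ)) * bb (2 * j) := by
      rw [Tfull' (2 * j) (by omega), hb1, sub_zero]
      push_cast; ring
    have hS0 : ∑ m ∈ range (j + 1), bb (2 * m) * bb (2 * j - 2 * m) =
        (1 - 2 * (j : ℚ)) * bb (2 * j) := by
      rw [← sum_even j (fun k => bb k * bb (2 * j - k)) hodd, hT]
    have hS2 : ∑ m ∈ range (j + 1), 4 ^ m * bb (2 * m) * bb (2 * j - 2 * m) =
        (1 - 2 * (j : ℚ)) * bb (2 * j) := by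
      have he : ∑ k ∈ range (2 * j + 1), 2 ^ k * bb k * bb (2 * j - k) =
          ∑ m ∈ range (j + 1), 2 ^ (2 * m) * bb (2 * m) * bb (2 * j - 2 * m) :=
        sum_even j (fun k => 2 ^ k * bb k * bb (2 * j - k))
          (fun k hk => by show (2:ℚ) ^ k * bb k * bb (2 * j - k) = 0
                          rw [mul_assoc, hodd k hk, mul_zero])
      rw [Ufull' (2 * j) (by omega), hb1, mul_zero, sub_zero, hT] at he
      rw [he]
      exact sum_congr rfl fun m _ => by rw [pow_mul]; norm_num
    have hS2' : ∑ m ∈ range (j + 1), 4 ^ (j - m) * bb (2 * m) * bb (2 * j - 2 * m) =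
        (1 - 2 * (j : ℚ)) * bb (2 * j) := by
      have hr := Finset.sum_range_reflect
        (fun m => (4:ℚ) ^ (j - m) * bb (2 * m) * bb (2 * j - 2 * m)) (j + 1)
      rw [← hr, ← hS2]
      refine sum_congr rfl fun m hm => ?_
      have hmj : m ≤ j := by have := mem_range.mp hm; omega
      rw [show j + 1 - 1 - m = j - m from by omega, show j - (j - m) = m from by omega,
        show 2 * j - 2 * (j - m) = 2 * m from by omega,
        show 2 * (j - m) = 2 * j - 2 * m from by omega]
      ring
    calc ∑ m ∈ range (j + 1),
          (4 ^ m - 2) * (4 ^ (j - m) - 2) * bb (2 * m) * bb (2 * (j - m))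
        = ∑ m ∈ range (j + 1),
          ((4:ℚ) ^ j * (bb (2 * m) * bb (2 * j - 2 * m)) +
            (-2) * (4 ^ m * bb (2 * m) * bb (2 * j - 2 * m)) +
            (-2) * (4 ^ (j - m) * bb (2 * m) * bb (2 * j - 2 * m)) +
            4 * (bb (2 * m) * bb (2 * j - 2 * m))) := by
          refine sum_congr rfl fun m hm => ?_
          rw [mem_range] at hm
          have h4 : (4:ℚ) ^ m * 4 ^ (j - m) = 4 ^ j := by
            rw [← pow_add]; congr 1; omega
          rw [show 2 * (j - m) = 2 * j - 2 * m from by omega]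
          linear_combination (bb (2*m) * bb (2*j - 2*m)) * h4
      _ = (4:ℚ) ^ j * (∑ m ∈ range (j + 1), bb (2 * m) * bb (2 * j - 2 * m)) +
            (-2) * (∑ m ∈ range (j + 1), 4 ^ m * bb (2 * m) * bb (2 * j - 2 * m)) +
            (-2) * (∑ m ∈ range (j + 1), 4 ^ (j-m) * bb (2 * m) * bb (2 * j - 2 * m)) +
            4 * (∑ m ∈ range (j + 1), bb (2 * m) * bb (2 * j - 2 * m)) := by
          rw [sum_add_distrib, sum_add_distrib, sum_add_distrib,
            ← mul_sum, ← mul_sum, ← mul_sum, ← mul_sum]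
      _ = (1 - 2 * (j : ℚ)) * 4 ^ j * bb (2 * j) := by
          rw [hS0, hS2, hS2']
          ring

open Real in
lemma zeta_even (k : ℕ) : riemannZeta ((2 * k : ℕ) : ℂ) =
    (-1) ^ (k + 1) * (4 : ℂ) ^ k * (π : ℂ) ^ (2 * k) * ((bb (2 * k) : ℚ) : ℂ) / 2 := by
  rcases Nat.eq_zero_or_pos k with rfl | hk
  · norm_num [riemannZeta_zero, bb]
  · rw [show ((2 * k : ℕ) : ℂ) = 2 * (k : ℕ) from by push_cast; ring,
      riemannZeta_two_mul_nat (by omega : k ≠ 0)]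
    have h2 : (2 : ℂ) ^ (2 * k - 1) * 2 = 4 ^ k := by
      rw [← pow_succ, show 2 * k - 1 + 1 = 2 * k from by omega, pow_mul]
      norm_num
    have hf : ((2 * k).factorial : ℂ) ≠ 0 := by
      exact_mod_cast Nat.factorial_ne_zero _
    have h2' : (2:ℂ) ^ (2 * k - 1) = 4 ^ k / 2 := by
      rw [eq_div_iff (two_ne_zero (α := ℂ))]; exact h2
    rw [bb, h2']
    push_cast
    field_simp


end AuxGosper

theorem gosper_zeta_identity (j : ℕ) (hj : 1 ≤ j) :
    2 * ∑ m ∈ Finset.range (j + 1),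
        (1 - (2 : ℂ) ^ (1 - 2 * (m : ℤ))) * (1 - (2 : ℂ) ^ (2 * ((m : ℤ) - j) + 1)) *
          riemannZeta (2 * m) * riemannZeta (2 * j - 2 * m) =
      -(1 - 2 * (j : ℂ)) * riemannZeta (2 * j) := by
  have key : ∀ m ∈ range (j + 1),
      (1 - (2 : ℂ) ^ (1 - 2 * (m : ℤ))) * (1 - (2 : ℂ) ^ (2 * ((m : ℤ) - j) + 1)) *
          riemannZeta (2 * m) * riemannZeta (2 * (j : ℂ) - 2 * m) =
        (-1) ^ j * (π : ℂ) ^ (2 * j) / 4 *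
          (((4 ^ m - 2) * (4 ^ (j - m) - 2) * bb (2 * m) * bb (2 * (j - m)) : ℚ) : ℂ) := by
    intro m hm
    have hmj : m ≤ j := by have := mem_range.mp hm; omega
    have hz1 : riemannZeta (2 * (m : ℂ)) =
        (-1) ^ (m + 1) * (4 : ℂ) ^ m * (π : ℂ) ^ (2 * m) * ((bb (2 * m) : ℚ) : ℂ) / 2 := by
      rw [show (2 * (m : ℂ)) = ((2 * m : ℕ) : ℂ) from by push_cast; ring]
      exact zeta_even m
    have hz2 : riemannZeta (2 * (j : ℂ) - 2 * m) =
        (-1) ^ ((j - m) + 1) * (4 : ℂ) ^ (j - m) * (π : ℂ) ^ (2 * (j - m)) *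
          ((bb (2 * (j - m)) : ℚ) : ℂ) / 2 := by
      rw [show (2 * (j : ℂ) - 2 * m) = ((2 * (j - m) : ℕ) : ℂ) from by
        push_cast [Nat.cast_sub hmj]; ring]
      exact zeta_even (j - m)
    have hp1 : (2 : ℂ) ^ (1 - 2 * (m : ℤ)) = 2 / 4 ^ m := by
      rw [zpow_sub₀ (two_ne_zero), zpow_one]
      congr 1
      rw [show (2 * (m : ℤ)) = ((2 * m : ℕ) : ℤ) from by push_cast; ring,
        zpow_natCast, pow_mul]
      norm_num
    have hp2 : (2 : ℂ) ^ (2 * ((m : ℤ) - j) + 1) = 2 / 4 ^ (j - m) := by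
      rw [show 2 * ((m : ℤ) - j) + 1 = 1 - 2 * ((j - m : ℕ) : ℤ) from by
        push_cast [Nat.cast_sub hmj]; ring]
      rw [zpow_sub₀ (two_ne_zero), zpow_one]
      congr 1
      rw [show (2 * ((j - m : ℕ) : ℤ)) = ((2 * (j - m) : ℕ) : ℤ) from by push_cast; ring,
        zpow_natCast, pow_mul]
      norm_num
    have ha : (4 : ℂ) ^ m ≠ 0 := pow_ne_zero _ (by norm_num)
    have hb : (4 : ℂ) ^ (j - m) ≠ 0 := pow_ne_zero _ (by norm_num)
    have hsg : ((-1 : ℂ)) ^ (m + 1) * (-1) ^ ((j - m) + 1) = (-1) ^ j := by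
      rw [← pow_add, show m + 1 + ((j - m) + 1) = j + 2 from by omega, pow_add]
      norm_num
    have hπ : (π : ℂ) ^ (2 * m) * (π : ℂ) ^ (2 * (j - m)) = (π : ℂ) ^ (2 * j) := by
      rw [← pow_add]; congr 1; omega
    have h4 : (4 : ℂ) ^ m * (4 : ℂ) ^ (j - m) = 4 ^ j := by
      rw [← pow_add]; congr 1; omega
    rw [hz1, hz2, hp1, hp2]
    push_cast
    rw [← hsg, ← hπ]
    field_simp
    have hcomb : ((-1:ℂ))^(m+1) * (-1)^((j-m)+1) * ((π:ℂ)^(2*m) * (π:ℂ)^(2*(j-m))) *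
        ((4:ℂ)^m * (4:ℂ)^(j-m)) = (-1)^j * (π:ℂ)^(2*j) * 4^j := by
      rw [hsg, hπ, h4]
    ring
  rw [Finset.sum_congr rfl key, ← mul_sum, ← Rat.cast_sum, Rj j hj,
    show (2 * (j:ℂ)) = ((2 * j : ℕ) : ℂ) from by push_cast; ring, zeta_even j]
  push_cast
  rw [pow_succ]
  ring
end

section
/- For every integer n ≥ 1, ζ(2n) = (2/(2n+1)) Σ_{k=1}^{n-1} ζ(2k) ζ(2n-2k) holds when n ≥ 2; equivalently for n ≥ 2, (2n+1) ζ(2n) = 2 Σ_{k=1}^{n-1} ζ(2k) ζ(2n-2k). -/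
open Finset

namespace EulerAux

open PowerSeries Nat


noncomputable def B : ℚ⟦X⟧ := bernoulliPowerSeries ℚ
noncomputable def E : ℚ⟦X⟧ := PowerSeries.exp ℚ - 1

lemma hBE : B * E = X := bernoulliPowerSeries_mul_exp_sub_one ℚ

lemma dexp : d⁄dX ℚ (PowerSeries.exp ℚ) = PowerSeries.exp ℚ := by
  ext n
  rw [PowerSeries.coeff_derivative, PowerSeries.coeff_exp, PowerSeries.coeff_exp]
  rw [Nat.factorial_succ]
  field_simp
  simp only [Algebra.algebraMap_self, RingHom.id_apply]
  push_cast
  field_simp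

lemma hder : d⁄dX ℚ B * E + B * PowerSeries.exp ℚ = 1 := by
  have := congrArg (d⁄dX ℚ) hBE
  rw [Derivation.leibniz, PowerSeries.derivative_X] at this
  have hdE : d⁄dX ℚ E = PowerSeries.exp ℚ := by
    show d⁄dX ℚ (PowerSeries.exp ℚ - 1) = _
    rw [map_sub, dexp]
    simp
  rw [hdE, smul_eq_mul, smul_eq_mul, show (E:ℚ⟦X⟧) = PowerSeries.exp ℚ - 1 from rfl] at this
  show d⁄dX ℚ B * (PowerSeries.exp ℚ - 1) + B * PowerSeries.exp ℚ = 1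
  linear_combination this

lemma key : B ^ 2 = (1 - X) * B - X * d⁄dX ℚ B := by
  have hE : E ≠ 0 := by
    intro h
    have := congrArg (PowerSeries.coeff 1) h
    simp [E, PowerSeries.coeff_exp] at this
  have h2 : B ^ 2 * E ^ 2 = ((1 - X) * B - X * d⁄dX ℚ B) * E ^ 2 := by
    have h1 := hBE
    have h2 := hder
    have hEdef : E = PowerSeries.exp ℚ - 1 := rfl
    rw [hEdef] at h1 h2 ⊢
    linear_combination (B * (PowerSeries.exp ℚ - 1) + X - ((1:ℚ⟦X⟧) - X) * (PowerSeries.exp ℚ - 1) - X * PowerSeries.exp ℚ) * h1 + X * (PowerSeries.exp ℚ - 1) * h2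
  exact mul_right_cancel₀ (pow_ne_zero 2 hE) h2

lemma coeffB (i : ℕ) : PowerSeries.coeff i B = bernoulli i / i ! := by
  simp [B, bernoulliPowerSeries]

lemma quad (m : ℕ) :
    ∑ p ∈ antidiagonal (m + 1), bernoulli p.1 / p.1 ! * (bernoulli p.2 / p.2 !)
      = bernoulli (m + 1) / ((m + 1)! : ℚ) - bernoulli m / (m ! : ℚ)
        - (m + 1) * (bernoulli (m + 1) / (m + 1)!) := by
  have h := congrArg (PowerSeries.coeff (m + 1)) key
  rw [sq, PowerSeries.coeff_mul] at h
  rw [sub_mul, one_mul, map_sub, map_sub, PowerSeries.coeff_succ_X_mul,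
    PowerSeries.coeff_succ_X_mul, PowerSeries.coeff_derivative] at h
  simp only [coeffB] at h
  rw [h]
  ring

lemma bodd {m : ℕ} (h : Odd m) (h1 : 1 < m) : bernoulli m = 0 := by
  rw [bernoulli_eq_bernoulli'_of_ne_one (by omega)]
  exact bernoulli'_eq_zero_of_odd h h1

lemma bsum (n : ℕ) (hn : 2 ≤ n) :
    ∑ k ∈ Finset.Ico 1 n,
        bernoulli (2 * k) / ((2 * k)! : ℚ) * (bernoulli (2 * (n - k)) / ((2 * (n - k))! : ℚ))
      = -(2 * (n : ℚ) + 1) * (bernoulli (2 * n) / ((2 * n)! : ℚ)) := by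
  set g : ℕ → ℚ := fun i => bernoulli i / (i ! : ℚ) * (bernoulli (2 * n - i) / ((2 * n - i)! : ℚ))
    with hg
  have h0 : ∑ i ∈ Finset.range (2 * n + 1), g i
      = (1 - 2 * n) * (bernoulli (2 * n) / ((2 * n)! : ℚ)) := by
    obtain ⟨m, hm⟩ : ∃ m, 2 * n = m + 1 := ⟨2 * n - 1, by omega⟩
    have hq := quad m
    rw [Finset.Nat.sum_antidiagonal_eq_sum_range_succ
      (fun i j => bernoulli i / (i ! : ℚ) * (bernoulli j / (j ! : ℚ)))] at hq
    have hodd : bernoulli m = 0 := bodd ⟨n - 1, by omega⟩ (by omega)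
    rw [hodd] at hq
    have hmq : (m : ℚ) = 2 * (n : ℚ) - 1 := by
      have := congrArg (Nat.cast : ℕ → ℚ) hm
      push_cast at this
      linarith
    simp only [hg, hm]
    rw [hq, hmq]
    ring
  have heven : ∑ i ∈ Finset.range (2 * n + 1), g i = ∑ k ∈ Finset.range (n + 1), g (2 * k) := by
    rw [← Finset.sum_filter_add_sum_filter_not (Finset.range (2 * n + 1)) (fun i => Even i)]
    have h1 : ∑ i ∈ (Finset.range (2 * n + 1)).filter (fun i => ¬ Even i), g i = 0 := by
      apply Finset.sum_eq_zero
      intro i hi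
      simp only [Finset.mem_filter, Finset.mem_range, Nat.even_iff] at hi
      obtain ⟨hi1, hi2⟩ := hi
      rcases eq_or_ne i 1 with rfl | h1
      · have : bernoulli (2 * n - 1) = 0 := bodd ⟨n - 1, by omega⟩ (by omega)
        simp [hg, this]
      · have : bernoulli i = 0 := by
          exact bodd (Nat.odd_iff.2 (by omega)) (by omega)
        simp [hg, this]
    have h2 : (Finset.range (2 * n + 1)).filter (fun i => Even i)
        = (Finset.range (n + 1)).image (fun k => 2 * k) := by
      ext x
      simp only [Finset.mem_filter, Finset.mem_range, Finset.mem_image, Nat.even_iff]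
      constructor
      · rintro ⟨hx, he⟩
        exact ⟨x / 2, by omega, by omega⟩
      · rintro ⟨k, hk, rfl⟩
        omega
    rw [h1, add_zero, h2, Finset.sum_image (fun a _ b _ h => by omega)]
  have hsplit : ∑ k ∈ Finset.range (n + 1), g (2 * k)
      = g 0 + (∑ k ∈ Finset.Ico 1 n, g (2 * k)) + g (2 * n) := by
    rw [Finset.sum_range_succ, Finset.range_eq_Ico,
      Finset.sum_eq_sum_Ico_succ_bot (by omega : 0 < n)]
  have hg0 : g 0 = bernoulli (2 * n) / ((2 * n)! : ℚ) := by simp [hg]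
  have hgn : g (2 * n) = bernoulli (2 * n) / ((2 * n)! : ℚ) := by simp [hg]
  have hfin : ∑ k ∈ Finset.Ico 1 n, g (2 * k)
      = ∑ k ∈ Finset.Ico 1 n,
          bernoulli (2 * k) / ((2 * k)! : ℚ) * (bernoulli (2 * (n - k)) / ((2 * (n - k))! : ℚ)) := by
    apply Finset.sum_congr rfl
    intro k hk
    simp only [Finset.mem_Ico] at hk
    simp only [hg]
    rw [show 2 * n - 2 * k = 2 * (n - k) from by omega]
  rw [heven, hsplit, hg0, hgn, hfin] at h0
  have : (2 * (n:ℚ)) = ((2 * n : ℕ) : ℚ) := by push_cast; ring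
  linarith [h0]

end EulerAux

open EulerAux Real Nat in
theorem euler_zeta_recurrence (n : ℕ) (hn : 2 ≤ n) :
    riemannZeta (2 * n) =
      (2 / (2 * (n : ℂ) + 1)) * ∑ k ∈ Finset.Ico 1 n, riemannZeta (2 * k) * riemannZeta (2 * n - 2 * k) := by
  have hterm : ∀ k ∈ Finset.Ico 1 n,
      riemannZeta (2 * k) * riemannZeta (2 * n - 2 * k)
        = ((-1) ^ n * (2:ℂ) ^ (2 * n - 2) * (π : ℂ) ^ (2 * n))
            * ((bernoulli (2 * k) : ℂ) / ((2 * k)! : ℂ)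
              * ((bernoulli (2 * (n - k)) : ℂ) / ((2 * (n - k))! : ℂ))) := by
    intro k hk
    simp only [Finset.mem_Ico] at hk
    have e1 : ((-1:ℂ))^(k+1) * (-1)^(n-k+1) = (-1)^n := by
      rw [← pow_add, show k+1+(n-k+1) = n+2 from by omega, pow_add]; ring
    have e2 : (2:ℂ)^(2*k-1) * 2^(2*(n-k)-1) = 2^(2*n-2) := by
      rw [← pow_add, show 2*k-1+(2*(n-k)-1) = 2*n-2 from by omega]
    have e3 : ((π:ℝ):ℂ)^(2*k) * ((π:ℝ):ℂ)^(2*(n-k)) = ((π:ℝ):ℂ)^(2*n) := by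
      rw [← pow_add, show 2*k+2*(n-k) = 2*n from by omega]
    rw [show (2 * (n:ℂ) - 2*(k:ℂ)) = 2 * ((n-k:ℕ):ℂ) from by
        push_cast [Nat.cast_sub hk.2.le]; ring,
      riemannZeta_two_mul_nat (by omega : k ≠ 0),
      riemannZeta_two_mul_nat (by omega : n - k ≠ 0),
      ← e1, ← e2, ← e3]
    ring
  rw [Finset.sum_congr rfl hterm, ← Finset.mul_sum]
  have hb := congrArg (Rat.cast : ℚ → ℂ) (bsum n hn)
  push_cast at hb
  rw [hb, riemannZeta_two_mul_nat (by omega : n ≠ 0)]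
  have hc : (2 * (n:ℂ) + 1) ≠ 0 := by
    have h : ((2 * n + 1 : ℕ) : ℂ) = 2 * (n:ℂ) + 1 := by push_cast; ring
    rw [← h]
    exact Nat.cast_ne_zero.2 (by omega)
  have h2 : (2:ℂ) ^ (2 * n - 1) = 2 ^ (2 * n - 2) * 2 := by
    rw [← pow_succ, show 2 * n - 2 + 1 = 2 * n - 1 from by omega]
  have hsgn : ((-1:ℂ)) ^ (n + 1) = (-1) ^ n * (-1) := by rw [pow_succ]
  have hf : (((2 * n)! : ℕ) : ℂ) ≠ 0 := Nat.cast_ne_zero.2 (Nat.factorial_ne_zero _)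
  field_simp [h2, hsgn]
  rw [h2, hsgn]
  ring
end

section
/- For every integer s ≥ 1, ζ(2s+2) = (2/(2^{2s+2} - 1)) Σ_{k=0}^{s-1} (2^{2k+2} - 1) ζ(2s-2k) ζ(2k+2). -/
open Finset PowerSeries Nat Real

local notation "G" => bernoulliPowerSeries ℚ
local notation "e" => PowerSeries.exp ℚ

lemma rescale_bps : (rescale (2:ℚ) G) * (e ^ 2 - 1) = 2 * X := by
  have h := congrArg (rescale (2:ℚ)) (bernoulliPowerSeries_mul_exp_sub_one ℚ)
  rw [map_mul, map_sub, map_one, rescale_X] at h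
  rw [exp_pow_eq_rescale_exp]
  push_cast
  rw [h]
  simp [map_ofNat]

lemma key_ps_s15 : 2 * ((rescale (2:ℚ) G - G) * G) + X * rescale (2:ℚ) G = 0 := by
  have h1 : G * (e - 1) = X := bernoulliPowerSeries_mul_exp_sub_one ℚ
  have h2 : (rescale (2:ℚ) G) * (e ^ 2 - 1) = 2 * X := rescale_bps
  have hne : ((e - 1) ^ 2 * (e + 1) : ℚ⟦X⟧) ≠ 0 := by
    apply mul_ne_zero (pow_ne_zero _ ?_) ?_
    · intro h
      have := congrArg (PowerSeries.coeff 1) h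
      simp [PowerSeries.coeff_exp] at this
    · intro h
      have := congrArg (PowerSeries.constantCoeff (R := ℚ)) h
      simp [PowerSeries.exp] at this
  apply mul_right_cancel₀ hne
  rw [zero_mul]
  have expand : (2 * ((rescale (2:ℚ) G - G) * G) + X * rescale (2:ℚ) G) * ((e - 1) ^ 2 * (e + 1))
      = 2 * (((rescale (2:ℚ) G) * (e ^ 2 - 1)) * (G * (e - 1)))
        - 2 * (G * (e - 1)) ^ 2 * (e + 1) + (X * (e - 1)) * ((rescale (2:ℚ) G) * (e ^ 2 - 1)) := by
    ring
  rw [expand, h1, h2]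
  ring

lemma bernoulli_odd {n : ℕ} (h1 : 1 < n) (h2 : Odd n) : bernoulli n = 0 := by
  rw [bernoulli_eq_bernoulli'_of_ne_one (by omega), bernoulli'_eq_zero_of_odd h2 h1]

lemma coeff_G (n : ℕ) : PowerSeries.coeff n G = bernoulli n / n ! := by
  simp [bernoulliPowerSeries]

lemma sum_zero (s : ℕ) (hs : 1 ≤ s) :
    ∑ i ∈ range (2*s+3),
      ((2:ℚ)^i - 1) * (bernoulli i / i !) * (bernoulli (2*s+2-i) / (2*s+2-i)!) = 0 := by
  have h := congrArg (PowerSeries.coeff (2*s+2)) key_ps_s15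
  have h2 : (2 : ℚ⟦X⟧) = PowerSeries.C (2:ℚ) := by simp [map_ofNat]
  rw [map_add, map_zero, h2, PowerSeries.coeff_C_mul, PowerSeries.coeff_mul] at h
  have hx : (PowerSeries.coeff (2*s+2)) (X * rescale (2:ℚ) G) = 0 := by
    have he : 2*s+2 = (2*s+1)+1 := rfl
    rw [he, PowerSeries.coeff_succ_X_mul, PowerSeries.coeff_rescale, coeff_G,
      bernoulli_odd (by omega) (odd_two_mul_add_one s)]
    simp
  rw [hx, add_zero, Finset.Nat.sum_antidiagonal_eq_sum_range_succ_mk] at h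
  simp only [map_sub, PowerSeries.coeff_rescale, coeff_G] at h
  have hc : ∑ i ∈ range (2*s+3),
      ((2:ℚ)^i - 1) * (bernoulli i / i !) * (bernoulli (2*s+2-i) / (2*s+2-i)!)
      = ∑ i ∈ range (2*s+2+1),
      ((2:ℚ)^i * (bernoulli i / i !) - bernoulli i / i !) * (bernoulli (2*s+2-i) / (2*s+2-i)!) := by
    apply Finset.sum_congr (by ring_nf) (fun i _ => by ring)
  rw [hc]
  linarith [h]

lemma bern_key (s : ℕ) (hs : 1 ≤ s) :
    ((2:ℚ)^(2*s+2) - 1) * (bernoulli (2*s+2) / (2*s+2)!) =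
      - ∑ k ∈ range s,
        ((2:ℚ)^(2*k+2) - 1) * (bernoulli (2*k+2) / (2*k+2)!) * (bernoulli (2*s-2*k) / (2*s-2*k)!) := by
  have h0 := sum_zero s hs
  set f : ℕ → ℚ := fun i =>
    ((2:ℚ)^i - 1) * (bernoulli i / i !) * (bernoulli (2*s+2-i) / (2*s+2-i)!) with hf
  have himg : ∑ i ∈ range (2*s+3), f i = ∑ a ∈ range (s+2), f (2*a) := by
    have himage : ∑ a ∈ range (s+2), f (2*a)
        = ∑ i ∈ (range (s+2)).image (fun a => 2*a), f i :=
      (Finset.sum_image (fun x _ y _ h => by omega)).symm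
    rw [himage]
    apply (Finset.sum_subset ?_ ?_).symm
    · intro x hx
      simp only [Finset.mem_image, Finset.mem_range] at hx ⊢
      omega
    · intro i hi hni
      simp only [Finset.mem_image, Finset.mem_range] at hi hni
      have hiodd : Odd i := by
        rcases Nat.even_or_odd i with he | ho
        · obtain ⟨j, hj⟩ := he
          exact absurd ⟨j, by omega, by omega⟩ hni
        · exact ho
      rcases eq_or_ne i 1 with h1 | h1
      · have : bernoulli (2*s+2-i) = 0 := by
          rw [h1]
          exact bernoulli_odd (by omega) ⟨s, by omega⟩
        simp [hf, this]
      · obtain ⟨m, hm⟩ := hiodd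
        have : bernoulli i = 0 := bernoulli_odd (by omega) ⟨m, hm⟩
        simp [hf, this]
  rw [himg] at h0
  rw [Finset.sum_range_succ' (fun a => f (2*a)) (s+1)] at h0
  have hf0 : f 0 = 0 := by simp [hf]
  rw [hf0, add_zero, Finset.sum_range_succ] at h0
  have hlast : f (2*(s+1)) = ((2:ℚ)^(2*s+2) - 1) * (bernoulli (2*s+2) / (2*s+2)!) := by
    have h1 : 2*(s+1) = 2*s+2 := by ring
    rw [hf]
    simp only [h1, Nat.sub_self]
    simp
  rw [hlast] at h0
  have hsum : ∑ a ∈ range s, f (2*(a+1)) = ∑ k ∈ range s,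
        ((2:ℚ)^(2*k+2) - 1) * (bernoulli (2*k+2) / (2*k+2)!) * (bernoulli (2*s-2*k) / (2*s-2*k)!) := by
    apply Finset.sum_congr rfl
    intro a ha
    simp only [Finset.mem_range] at ha
    have h1 : 2*(a+1) = 2*a+2 := by ring
    have h2 : 2*s+2-(2*a+2) = 2*s-2*a := by omega
    simp only [hf, h1, h2]
  rw [hsum] at h0
  linarith

theorem zeta_recurrence_lettington (s : ℕ) (hs : 1 ≤ s) :
    riemannZeta (2 * s + 2) =
      (2 / ((2 : ℂ) ^ (2 * s + 2) - 1)) *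
        ∑ k ∈ Finset.range s, ((2 : ℂ) ^ (2 * k + 2) - 1) * riemannZeta (2 * s - 2 * k) * riemannZeta (2 * k + 2) := by
  have hπ : (π : ℂ) ≠ 0 := Complex.ofReal_ne_zero.mpr Real.pi_ne_zero
  have h2 : ((2:ℂ)^(2*s+2) - 1) ≠ 0 := by
    have h : ((2:ℂ)^(2*s+2) : ℂ) = ((2^(2*s+2) : ℕ) : ℂ) := by push_cast; ring
    rw [h, sub_ne_zero]
    intro hcontra
    rw [show (1:ℂ) = ((1:ℕ):ℂ) by norm_num, Nat.cast_inj] at hcontra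
    have := Nat.one_lt_two_pow_iff.mpr (by omega : 2*s+2 ≠ 0)
    omega
  have hR : ∀ k ∈ range s,
      ((2:ℂ)^(2*k+2) - 1) * riemannZeta (2*(s:ℂ) - 2*(k:ℂ)) * riemannZeta (2*(k:ℂ)+2)
        = (-1)^(s+3) * 2^(2*s) * (π:ℂ)^(2*s+2) *
          ((((2:ℚ)^(2*k+2) - 1) * (bernoulli (2*k+2)/(2*k+2)!) * (bernoulli (2*s-2*k)/(2*s-2*k)!) : ℚ) : ℂ) := by
    intro k hk
    rw [Finset.mem_range] at hk
    obtain ⟨j, rfl⟩ : ∃ j, s = k + j + 1 := ⟨s - k - 1, by omega⟩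
    rw [show (2*((k+j+1 : ℕ):ℂ) - 2*(k:ℂ)) = 2*((j+1 : ℕ):ℂ) by push_cast; ring,
        show (2*(k:ℂ)+2) = 2*((k+1:ℕ):ℂ) by push_cast; ring,
        riemannZeta_two_mul_nat (show j+1 ≠ 0 by omega),
        riemannZeta_two_mul_nat (show k+1 ≠ 0 by omega)]
    rw [show 2*(j+1)-1 = 2*j+1 from by omega, show 2*(k+1)-1 = 2*k+1 from by omega,
        show 2*(k+j+1)-2*k = 2*j+2 from by omega, show 2*(j+1) = 2*j+2 from by omega,
        show 2*(k+1) = 2*k+2 from by omega]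
    push_cast
    ring
  rw [Finset.sum_congr rfl hR, ← Finset.mul_sum, ← Rat.cast_sum]
  have hb := bern_key s hs
  rw [show ∑ k ∈ range s, ((2:ℚ)^(2*k+2) - 1) * (bernoulli (2*k+2)/(2*k+2)!) * (bernoulli (2*s-2*k)/(2*s-2*k)!)
      = - (((2:ℚ)^(2*s+2) - 1) * (bernoulli (2*s+2) / (2*s+2)!)) from by rw [hb]; ring]
  rw [show (2*(s:ℂ)+2) = 2*((s+1 : ℕ):ℂ) by push_cast; ring,
      riemannZeta_two_mul_nat (show s+1 ≠ 0 by omega),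
      show 2*(s+1)-1 = 2*s+1 from by omega, show 2*(s+1) = 2*s+2 from by omega]
  push_cast
  have hfac : ((2*s+2)! : ℂ) ≠ 0 := Nat.cast_ne_zero.mpr (Nat.factorial_ne_zero _)
  field_simp
  ring
end

section
/- For every integer n ≥ 0, Σ_{k=0}^{n} C(6n+3, 6k) B_{6k} = 2n + 1, where B denotes Bernoulli numbers and C binomial coefficients. -/
open Finset

namespace LehmerAux

open PowerSeries

noncomputable def E (a : ℂ) : PowerSeries ℂ := rescale a (exp ℂ)
noncomputable def T (a : ℂ) : PowerSeries ℂ := rescale a (bernoulliPowerSeries ℂ)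

lemma E_mul (a b : ℂ) : E a * E b = E (a + b) := exp_mul_exp_eq_exp_add a b

lemma E_zero : E 0 = 1 := by
  simp [E, rescale_zero]

lemma coeff_E (a : ℂ) (m : ℕ) : coeff m (E a) = a ^ m * algebraMap ℚ ℂ (1 / (m.factorial : ℚ)) := by
  simp [E, coeff_rescale, coeff_exp]

lemma coeff_T (a : ℂ) (m : ℕ) :
    coeff m (T a) = a ^ m * algebraMap ℚ ℂ (bernoulli m / (m.factorial : ℚ)) := by
  simp [T, coeff_rescale, bernoulliPowerSeries, coeff_mk]

lemma T_key (a : ℂ) : T a * (E a - 1) = C a * X := by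
  have h := congrArg (rescale a) (bernoulliPowerSeries_mul_exp_sub_one ℂ)
  rw [map_mul, map_sub, map_one, rescale_X] at h
  exact h

lemma T_neg (a : ℂ) : T (-a) * (E a - 1) = C a * X * E a := by
  have k := T_key (-a)
  rw [map_neg] at k
  have e : E (-a) * E a = 1 := by rw [E_mul, neg_add_cancel, E_zero]
  linear_combination (-(E a)) * k + (T (-a)) * e


section Omega

variable {ω : ℂ} (hω : ω ^ 2 + ω + 1 = 0)

include hω

lemma hw3 : ω ^ 3 = 1 := by linear_combination (ω - 1) * hω

lemma pow6 (k : ℕ) : ω ^ (6 * k) = 1 := by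
  rw [show 6 * k = 3 * (2 * k) by ring, pow_mul, hw3 hω, one_pow]

lemma pow_mod3 (i : ℕ) : ω ^ i = ω ^ (i % 3) := by
  conv_lhs => rw [← Nat.div_add_mod i 3]
  rw [pow_add, pow_mul, hw3 hω, one_pow, one_mul]

lemma sigma_not_six {i : ℕ} (h : ¬ 6 ∣ i) :
    (1 : ℂ) + (-1) ^ i + ω ^ i + (-ω) ^ i + (ω ^ 2) ^ i + (-ω ^ 2) ^ i = 0 := by
  rcases Nat.even_or_odd i with he | ho
  · have he' : 2 ∣ i := he.two_dvd
    have h3 : ¬ 3 ∣ i := fun h3 => h (by omega)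
    rw [he.neg_pow, he.neg_pow, he.neg_pow, one_pow, ← pow_mul, pow_mod3 hω,
      pow_mod3 hω (2 * i)]
    have hmod : i % 3 = 1 ∨ i % 3 = 2 := by omega
    rcases hmod with hm | hm
    · have hm2 : 2 * i % 3 = 2 := by omega
      rw [hm, hm2]
      linear_combination 2 * hω
    · have hm2 : 2 * i % 3 = 1 := by omega
      rw [hm, hm2]
      linear_combination 2 * hω
  · rw [ho.neg_pow, ho.neg_pow, ho.neg_pow]
    ring

lemma sigma_six (k : ℕ) :
    (1 : ℂ) + (-1) ^ (6 * k) + ω ^ (6 * k) + (-ω) ^ (6 * k) + (ω ^ 2) ^ (6 * k)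
      + (-ω ^ 2) ^ (6 * k) = 6 := by
  have he : Even (6 * k) := ⟨3 * k, by ring⟩
  rw [he.neg_pow, he.neg_pow, he.neg_pow, one_pow, pow6 hω, ← pow_mul,
    show 2 * (6 * k) = 6 * (2 * k) by ring, pow6 hω]
  norm_num

lemma pow63 (l : ℕ) : ω ^ (6 * l + 3) = 1 := by
  rw [show 6 * l + 3 = 3 * (2 * l + 1) by ring, pow_mul, hw3 hω, one_pow]

lemma pow62 (l : ℕ) : ω ^ (6 * l + 2) = ω ^ 2 := by
  rw [pow_mod3 hω]
  norm_num [Nat.add_mod, Nat.mul_mod]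

end Omega
noncomputable def F (ω : ℂ) : PowerSeries ℂ :=
  T 1 + T (-1) + T ω + T (-ω) + T (ω ^ 2) + T (-ω ^ 2)

lemma coeff_F (ω : ℂ) (i : ℕ) :
    PowerSeries.coeff i (F ω) =
      ((1 : ℂ) + (-1) ^ i + ω ^ i + (-ω) ^ i + (ω ^ 2) ^ i + (-ω ^ 2) ^ i) *
        algebraMap ℚ ℂ (bernoulli i / (i.factorial : ℚ)) := by
  simp only [F, map_add, coeff_T]
  ring

lemma FD (ω : ℂ) :
    F ω * ((E 1 - 1) * (E ω - 1) * (E (ω ^ 2) - 1)) =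
      X * ((1 + E 1) * (E ω - 1) * (E (ω ^ 2) - 1)
        + C ω * ((1 + E ω) * (E 1 - 1) * (E (ω ^ 2) - 1))
        + C (ω ^ 2) * ((1 + E (ω ^ 2)) * (E 1 - 1) * (E ω - 1))) := by
  have h1 := T_key 1
  have h1' := T_neg 1
  rw [map_one] at h1 h1'
  have h2 := T_key ω
  have h2' := T_neg ω
  have h3 := T_key (ω ^ 2)
  have h3' := T_neg (ω ^ 2)
  simp only [F]
  linear_combination ((E ω - 1) * (E (ω ^ 2) - 1)) * (h1 + h1')
    + ((E 1 - 1) * (E (ω ^ 2) - 1)) * (h2 + h2')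
    + ((E 1 - 1) * (E ω - 1)) * (h3 + h3')

section Omega2

variable {ω : ℂ} (hω : ω ^ 2 + ω + 1 = 0)
include hω

lemma m1 : E 1 * E ω = E (-ω ^ 2) := by
  rw [E_mul, show (1 : ℂ) + ω = -ω ^ 2 from by linear_combination hω]
lemma m2 : E 1 * E (ω ^ 2) = E (-ω) := by
  rw [E_mul, show (1 : ℂ) + ω ^ 2 = -ω from by linear_combination hω]
lemma m3 : E ω * E (ω ^ 2) = E (-1) := by
  rw [E_mul, show ω + ω ^ 2 = (-1 : ℂ) from by linear_combination hω]
lemma m4 : E 1 * (E ω * E (ω ^ 2)) = 1 := by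
  rw [m3 hω, E_mul, add_neg_cancel, E_zero]

lemma Dsum : (E 1 - 1) * (E ω - 1) * (E (ω ^ 2) - 1) =
    E 1 + E ω + E (ω ^ 2) - E (-1) - E (-ω) - E (-ω ^ 2) := by
  linear_combination m4 hω - m1 hω - m2 hω - m3 hω

lemma p1 : (1 + E 1) * (E ω - 1) * (E (ω ^ 2) - 1) =
    1 + 1 + E 1 - E ω - E (ω ^ 2) + E (-1) - E (-ω) - E (-ω ^ 2) := by
  linear_combination m3 hω + m4 hω - m1 hω - m2 hω

lemma p2 : (1 + E ω) * (E 1 - 1) * (E (ω ^ 2) - 1) =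
    1 + 1 + E ω - E 1 - E (ω ^ 2) + E (-ω) - E (-ω ^ 2) - E (-1) := by
  linear_combination m2 hω + m4 hω - m1 hω - m3 hω

lemma p3 : (1 + E (ω ^ 2)) * (E 1 - 1) * (E ω - 1) =
    1 + 1 + E (ω ^ 2) - E 1 - E ω + E (-ω ^ 2) - E (-ω) - E (-1) := by
  linear_combination m1 hω + m4 hω - m2 hω - m3 hω

end Omega2
section Omega3

open PowerSeries

variable {ω : ℂ} (hω : ω ^ 2 + ω + 1 = 0)
include hω

lemma pow_red (q r : ℕ) : ω ^ (3 * q + r) = ω ^ r := by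
  rw [pow_add, pow_mul, hw3 hω, one_pow, one_mul]

lemma coeffP (n : ℕ) :
    coeff (6 * n + 2)
      ((1 + E 1) * (E ω - 1) * (E (ω ^ 2) - 1)
        + C ω * ((1 + E ω) * (E 1 - 1) * (E (ω ^ 2) - 1))
        + C (ω ^ 2) * ((1 + E (ω ^ 2)) * (E 1 - 1) * (E ω - 1)))
      = algebraMap ℚ ℂ (12 / (((6 * n + 2).factorial : ℚ))) := by
  rw [p1 hω, p2 hω, p3 hω]
  have e2 : Even (6 * n + 2) := ⟨3 * n + 1, by ring⟩
  have hw : ω ^ (6 * n + 2) = ω ^ 2 := by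
    rw [show 6 * n + 2 = 3 * (2 * n) + 2 by ring, pow_red hω]
  have hw2 : (ω ^ 2) ^ (6 * n + 2) = ω := by
    rw [← pow_mul, show 2 * (6 * n + 2) = 3 * (4 * n + 1) + 1 by ring, pow_red hω, pow_one]
  have hn1 : (-1 : ℂ) ^ (6 * n + 2) = 1 := e2.neg_one_pow
  have hnw : (-ω) ^ (6 * n + 2) = ω ^ 2 := by rw [e2.neg_pow, hw]
  have hnw2 : (-ω ^ 2) ^ (6 * n + 2) = ω := by rw [e2.neg_pow, hw2]
  simp only [map_add, map_sub, coeff_C_mul, coeff_E, coeff_one,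
    if_neg (show ¬(6 * n + 2 = 0) by omega), hw, hw2, hn1, hnw, hnw2, one_pow]
  rw [show (12 : ℚ) / ((6 * n + 2).factorial : ℚ) = 12 * (1 / ((6 * n + 2).factorial : ℚ)) by
    ring, map_mul, map_ofNat]
  linear_combination (algebraMap ℚ ℂ (1 / ((6 * n + 2).factorial : ℚ)))
    * (-2 * ω ^ 2 + 6 * ω - 10) * hω

lemma filter3 (n : ℕ) :
    coeff (6 * n + 3) (F ω * (C 6 * exp ℂ
      - (E 1 + E ω + E (ω ^ 2) - E (-1) - E (-ω) - E (-ω ^ 2)))) = 0 := by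
  rw [coeff_mul]
  apply Finset.sum_eq_zero
  rintro ⟨i, j⟩ hp
  rw [Finset.HasAntidiagonal.mem_antidiagonal] at hp
  by_cases h6 : 6 ∣ i
  · obtain ⟨k, rfl⟩ := h6
    obtain ⟨l, rfl⟩ : ∃ l, j = 6 * l + 3 := ⟨(j - 3) / 6, by omega⟩
    have hodd : Odd (6 * l + 3) := ⟨3 * l + 1, by ring⟩
    have q1 : ω ^ (6 * l + 3) = 1 := pow63 hω l
    have q2 : (ω ^ 2) ^ (6 * l + 3) = 1 := by
      rw [← pow_mul, show 2 * (6 * l + 3) = 6 * (2 * l + 1) by ring, pow6 hω]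
    have hj : coeff (6 * l + 3) (C 6 * exp ℂ
        - (E 1 + E ω + E (ω ^ 2) - E (-1) - E (-ω) - E (-ω ^ 2))) = 0 := by
      simp only [map_sub, map_add, coeff_C_mul, coeff_E, coeff_exp, hodd.neg_pow,
        hodd.neg_one_pow, q1, q2, one_pow]
      ring
    rw [hj, mul_zero]
  · have hi : coeff i (F ω) = 0 := by
      rw [coeff_F, sigma_not_six hω h6, zero_mul]
    rw [hi, zero_mul]

end Omega3

lemma sum_range_six (f : ℕ → ℂ) (hf : ∀ i, ¬ 6 ∣ i → f i = 0) (n : ℕ) :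
    ∑ i ∈ Finset.range (6 * n + 4), f i = ∑ k ∈ Finset.range (n + 1), f (6 * k) := by
  induction n with
  | zero =>
    rw [show 6 * 0 + 4 = 4 by norm_num, Finset.sum_range_succ, Finset.sum_range_succ,
      Finset.sum_range_succ, Finset.sum_range_one, Finset.sum_range_one,
      hf 1 (by omega), hf 2 (by omega), hf 3 (by omega)]
    norm_num
  | succ n ih =>
    rw [show 6 * (n + 1) + 4 = (6 * n + 4) + 1 + 1 + 1 + 1 + 1 + 1 by ring,
      Finset.sum_range_succ, Finset.sum_range_succ, Finset.sum_range_succ,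
      Finset.sum_range_succ, Finset.sum_range_succ, Finset.sum_range_succ, ih,
      Finset.sum_range_succ, hf (6 * n + 4) (by omega), hf (6 * n + 4 + 1) (by omega),
      hf (6 * n + 4 + 1 + 1 + 1) (by omega), hf (6 * n + 4 + 1 + 1 + 1 + 1) (by omega),
      hf (6 * n + 4 + 1 + 1 + 1 + 1 + 1) (by omega),
      show 6 * n + 4 + 1 + 1 = 6 * (n + 1) by ring, Finset.sum_range_succ, Finset.sum_range_succ]
    ring

section Omega4

open PowerSeries

variable {ω : ℂ} (hω : ω ^ 2 + ω + 1 = 0)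
include hω

lemma c1 (n : ℕ) : coeff (6 * n + 3) (F ω * exp ℂ) =
    algebraMap ℚ ℂ ((6 / (((6 * n + 3).factorial : ℚ))) *
      ∑ k ∈ Finset.range (n + 1),
        (Nat.choose (6 * n + 3) (6 * k) : ℚ) * bernoulli (6 * k)) := by
  rw [coeff_mul, Finset.Nat.sum_antidiagonal_eq_sum_range_succ_mk]
  dsimp only
  rw [show (6 * n + 3).succ = 6 * n + 4 by omega,
    sum_range_six _ (fun i hi => by rw [coeff_F, sigma_not_six hω hi, zero_mul, zero_mul]) n,
    Finset.mul_sum, map_sum]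
  refine Finset.sum_congr rfl fun k hk => ?_
  have hk' : 6 * k ≤ 6 * n + 3 := by
    rw [Finset.mem_range] at hk; omega
  rw [coeff_F, sigma_six hω, coeff_exp,
    show (6 : ℂ) = algebraMap ℚ ℂ 6 by norm_num, ← map_mul, ← map_mul]
  congr 1
  rw [Nat.cast_choose ℚ hk']
  have f1 : ((6 * k).factorial : ℚ) ≠ 0 := Nat.cast_ne_zero.mpr (Nat.factorial_ne_zero _)
  have f2 : ((6 * n + 3 - 6 * k).factorial : ℚ) ≠ 0 :=
    Nat.cast_ne_zero.mpr (Nat.factorial_ne_zero _)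
  have f3 : ((6 * n + 3).factorial : ℚ) ≠ 0 := Nat.cast_ne_zero.mpr (Nat.factorial_ne_zero _)
  field_simp

end Omega4

end LehmerAux

theorem lehmer_recurrence_one (n : ℕ) :
    ∑ k ∈ Finset.range (n + 1), (Nat.choose (6 * n + 3) (6 * k) : ℚ) * bernoulli (6 * k) =
      2 * n + 1 := by
  classical
  obtain ⟨ω, hω⟩ : ∃ ω : ℂ, ω ^ 2 + ω + 1 = 0 := by
    refine ⟨(-1 + Complex.I * (Real.sqrt 3 : ℂ)) / 2, ?_⟩
    have hI : (Complex.I : ℂ) ^ 2 = -1 := Complex.I_sq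
    have h3 : ((Real.sqrt 3 : ℝ) : ℂ) ^ 2 = 3 := by
      rw [← Complex.ofReal_pow, Real.sq_sqrt (by norm_num : (3:ℝ) ≥ 0)]
      norm_num
    linear_combination (((Real.sqrt 3 : ℝ) : ℂ) ^ 2 / 4) * hI - (1 / 4 : ℂ) * h3
  set S : ℚ := ∑ k ∈ Finset.range (n + 1),
    (Nat.choose (6 * n + 3) (6 * k) : ℚ) * bernoulli (6 * k) with hS
  open LehmerAux PowerSeries in
  have key : (6 : ℂ) * coeff (6 * n + 3) (F ω * exp ℂ)
      = algebraMap ℚ ℂ (12 / (((6 * n + 2).factorial : ℚ))) := by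
    have hf3 := LehmerAux.filter3 hω n
    rw [show F ω * (C 6 * exp ℂ
        - (E 1 + E ω + E (ω ^ 2) - E (-1) - E (-ω) - E (-ω ^ 2)))
      = C 6 * (F ω * exp ℂ)
        - F ω * (E 1 + E ω + E (ω ^ 2) - E (-1) - E (-ω) - E (-ω ^ 2)) by ring,
      map_sub, coeff_C_mul, ← LehmerAux.Dsum hω, LehmerAux.FD ω,
      show 6 * n + 3 = (6 * n + 2) + 1 by ring, coeff_succ_X_mul,
      LehmerAux.coeffP hω n, sub_eq_zero] at hf3
    rw [show (6:ℕ)*n+2+1 = 6*n+3 by ring] at hf3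
    exact hf3
  rw [LehmerAux.c1 hω n, ← hS,
    show (6 : ℂ) = algebraMap ℚ ℂ 6 by norm_num, ← map_mul] at key
  have hq := (algebraMap ℚ ℂ).injective key
  have hfac : ((6 * n + 3).factorial : ℚ) = (6 * n + 3) * ((6 * n + 2).factorial : ℚ) := by
    rw [show 6 * n + 3 = (6 * n + 2) + 1 by omega, Nat.factorial_succ]
    push_cast
    ring
  have f2 : ((6 * n + 2).factorial : ℚ) ≠ 0 := Nat.cast_ne_zero.mpr (Nat.factorial_ne_zero _)
  have f3 : ((6 * n + 3).factorial : ℚ) ≠ 0 := Nat.cast_ne_zero.mpr (Nat.factorial_ne_zero _)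
  rw [hfac] at hq
  field_simp at hq
  have h2 : (36 * S) * ((6 * n + 2).factorial : ℚ)
      = (12 * (6 * (n : ℚ) + 3)) * ((6 * n + 2).factorial : ℚ) := by linear_combination ((6 * n + 2).factorial : ℚ) * hq
  have h3 := mul_right_cancel₀ f2 h2
  linarith
end

section
/- For every integer n ≥ 0, Σ_{k=0}^{n} C(6n+5, 6k+2) B_{6k+2} = (6n+5)/3. -/
open Finset

namespace LehmerAux

open PowerSeries

noncomputable def ww : ℂ := ⟨1/2, Real.sqrt 3 / 2⟩

lemma ww_eq : ww = (1 + Real.sqrt 3 * Complex.I)/2 := by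
  apply Complex.ext <;> simp [ww]

lemma hw2 : ww^2 = ww - 1 := by
  have h3 : (Real.sqrt 3 : ℂ)^2 = 3 := by
    norm_cast
    rw [Real.sq_sqrt] <;> norm_num
  rw [ww_eq]
  linear_combination (Complex.I^2/4) * h3 + (3/4) * Complex.I_sq

lemma hw3_s18 : ww^3 = -1 := by linear_combination (ww + 1) * hw2
lemma hw6 : ww^6 = 1 := by linear_combination (ww^4 + ww^3 - ww - 1) * hw2
lemma hw0 : ww ≠ 0 := by
  intro h
  have h' := hw3_s18
  rw [h] at h'
  norm_num at h'
lemma hwne1 : ww ≠ 1 := by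
  intro h
  have h' := hw2
  rw [h] at h'
  norm_num at h'
lemma hwne : ∀ r, r < 6 → r ≠ 0 → ww^r ≠ 1 := by
  intro r hr h0
  have h2 : ww^2 ≠ 1 := by
    rw [hw2]; intro h
    have he : ww = 2 := by linear_combination h
    have h' := hw2
    rw [he] at h'; norm_num at h'
  have h4 : ww^4 ≠ 1 := by
    have e : ww^4 = -ww := by linear_combination (ww^2 + ww)*hw2
    rw [e]; intro h
    have he : ww = -1 := by linear_combination -h
    have h' := hw2
    rw [he] at h'; norm_num at h'
  have h5 : ww^5 ≠ 1 := by
    have e : ww^5 = 1 - ww := by linear_combination (ww^3 + ww^2 - 1)*hw2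
    rw [e]; intro h
    exact hw0 (by linear_combination -h)
  interval_cases r
  · exact absurd rfl h0
  · simpa using hwne1
  · exact h2
  · rw [hw3_s18]; norm_num
  · exact h4
  · exact h5

lemma hwper (k : ℕ) : ww ^ k = ww ^ (k % 6) := by
  conv_lhs => rw [← Nat.div_add_mod k 6]
  rw [pow_add, pow_mul, hw6, one_pow, one_mul]

lemma filt (d : ℕ) : ∑ j ∈ Finset.range 6, ww^(j*d) = if d % 6 = 0 then 6 else 0 := by
  have key : ∀ j, ww^(j*d) = (ww^d)^j := fun j => by rw [← pow_mul, Nat.mul_comm]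
  simp only [key]
  by_cases h : d % 6 = 0
  · have : ww^d = 1 := by rw [hwper, h, pow_zero]
    simp [this, h]
  · have hz : ww^d ≠ 1 := by
      rw [hwper]
      exact hwne _ (Nat.mod_lt _ (by norm_num)) h
    rw [geom_sum_eq hz]
    have h6 : (ww^d)^6 = 1 := by
      rw [← pow_mul, Nat.mul_comm, pow_mul, hw6, one_pow]
    rw [h6]
    simp [h]

noncomputable def U (j : ℕ) : ℂ⟦X⟧ := rescale (ww^j) (exp ℂ)
noncomputable def Bs (i : ℕ) : ℂ⟦X⟧ := rescale (ww^i) (bernoulliPowerSeries ℂ)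

lemma coeff_U (j k : ℕ) : coeff (R := ℂ) k (U j) = ww^(j*k) * algebraMap ℚ ℂ (1/(Nat.factorial k)) := by
  rw [U, coeff_rescale, coeff_exp, ← pow_mul]

lemma coeff_Bs (i k : ℕ) :
    coeff (R := ℂ) k (Bs i) = ww^(i*k) * algebraMap ℚ ℂ (bernoulli k / (Nat.factorial k)) := by
  rw [Bs, coeff_rescale, bernoulliPowerSeries, coeff_mk, ← pow_mul]

lemma hUmul (i j : ℕ) : U i * U j = rescale (ww^i + ww^j) (exp ℂ) :=
  exp_mul_exp_eq_exp_add _ _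

lemma hUx : U 0 * U 3 = 1 := by
  rw [hUmul, pow_zero, hw3_s18, add_neg_cancel, rescale_zero]
  simp [constantCoeff_exp]

lemma hUy : U 1 * U 4 = 1 := by
  have e : ww^1 + ww^4 = 0 := by linear_combination (ww^2+ww)*hw2
  rw [hUmul, e, rescale_zero]
  simp [constantCoeff_exp]

lemma hU2 : U 2 = U 1 * U 3 := by
  have e : ww^1 + ww^3 = ww^2 := by linear_combination ww*hw2
  rw [hUmul, e, U]

lemma hU5 : U 5 = U 0 * U 4 := by
  have e : ww^0 + ww^4 = ww^5 := by linear_combination (-ww^3 + ww + 1)*hw2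
  rw [hUmul, e, U]

lemma hBU (i : ℕ) : Bs i * (U i - 1) = C (R := ℂ) (ww^i) * X := by
  have h := congrArg (rescale (ww^i)) (bernoulliPowerSeries_mul_exp_sub_one ℂ)
  rw [map_mul, map_sub, map_one, rescale_X] at h
  exact h

lemma hUne (i : ℕ) : U i - 1 ≠ 0 := by
  intro h
  have h1 := congrArg (coeff (R := ℂ) 1) h
  rw [map_sub, coeff_U, map_zero] at h1
  rw [PowerSeries.coeff_one] at h1
  norm_num [Nat.factorial] at h1
  exact hw0 h1.1

lemma hb0 : Bs 0 * (U 0 - 1) = X := by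
  have h := hBU 0; rwa [pow_zero, map_one, one_mul] at h
lemma hb1 : Bs 1 * (U 1 - 1) = C (R := ℂ) ww * X := by
  have h := hBU 1; rwa [pow_one] at h
lemma hb2 : Bs 2 * (U 1 * U 3 - 1) = (C (R := ℂ) ww - 1) * X := by
  have h := hBU 2; rwa [hw2, map_sub, map_one, hU2] at h
lemma hb3 : Bs 3 * (U 3 - 1) = -X := by
  have h := hBU 3; rwa [hw3_s18, map_neg, map_one, neg_one_mul] at h
lemma hb4 : Bs 4 * (U 4 - 1) = -(C (R := ℂ) ww * X) := by
  have h := hBU 4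
  have e : ww^4 = -ww := by linear_combination (ww^2 + ww)*hw2
  rwa [e, map_neg, neg_mul] at h
lemma hb5 : Bs 5 * (U 0 * U 4 - 1) = (1 - C (R := ℂ) ww) * X := by
  have h := hBU 5
  have e : ww^5 = 1 - ww := by linear_combination (ww^3 + ww^2 - 1)*hw2
  rwa [e, map_sub, map_one, hU5] at h

lemma main :
    (Bs 0 - C (R := ℂ) ww * Bs 1 + (C (R := ℂ) ww - 1) * Bs 2 + Bs 3 - C (R := ℂ) ww * Bs 4 + (C (R := ℂ) ww - 1) * Bs 5) *
    (U 0 - U 1 + U 2 - U 3 + U 4 - U 5)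
    = 2 * X * (U 0 + (C (R := ℂ) ww - 1) * U 1 - C (R := ℂ) ww * U 2 + U 3 + (C (R := ℂ) ww - 1) * U 4 - C (R := ℂ) ww * U 5) := by
  have h2ne : U 1 * U 3 - 1 ≠ 0 := by rw [← hU2]; exact hUne 2
  rw [hU2, hU5]
  apply mul_right_cancel₀ (mul_ne_zero (mul_ne_zero (hUne 0) (hUne 1)) h2ne)
  have hx := hUx
  have hy := hUy
  have hw : (C (R := ℂ) ww)^2 = C (R := ℂ) ww - 1 := by rw [← map_pow, hw2, map_sub, map_one]
  linear_combination ((U 4)-(U 1)-(U 1)*(U 4)+(U 1)^2-(U 3)+2*(U 3)*(U 1)-(U 3)*(U 1)*(U 4)+(U 3)*(U 1)^2*(U 4)-(U 3)*(U 1)^3+(U 3)^2*(U 1)-2*(U 3)^2*(U 1)^2+(U 3)^2*(U 1)^3+(U 0)-(U 0)*(U 4)-(U 0)*(U 1)+(U 0)*(U 1)*(U 4)-(U 0)*(U 3)*(U 1)+(U 0)*(U 3)*(U 1)*(U 4)+(U 0)*(U 3)*(U 1)^2-(U 0)*(U 3)*(U 1)^2*(U 4)) * hb0 +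
    (-(U 4)*(C (R := ℂ) ww)+(U 1)*(C (R := ℂ) ww)+(U 3)*(C (R := ℂ) ww)-(U 3)*(U 1)*(C (R := ℂ) ww)+(U 3)*(U 1)*(U 4)*(C (R := ℂ) ww)-(U 3)*(U 1)^2*(C (R := ℂ) ww)-(U 3)^2*(U 1)*(C (R := ℂ) ww)+(U 3)^2*(U 1)^2*(C (R := ℂ) ww)-(U 0)*(C (R := ℂ) ww)+2*(U 0)*(U 4)*(C (R := ℂ) ww)-(U 0)*(U 1)*(C (R := ℂ) ww)-(U 0)*(U 3)*(C (R := ℂ) ww)+2*(U 0)*(U 3)*(U 1)*(C (R := ℂ) ww)-2*(U 0)*(U 3)*(U 1)*(U 4)*(C (R := ℂ) ww)+(U 0)*(U 3)*(U 1)^2*(C (R := ℂ) ww)+(U 0)*(U 3)^2*(U 1)*(C (R := ℂ) ww)-(U 0)*(U 3)^2*(U 1)^2*(C (R := ℂ) ww)+(U 0)^2*(C (R := ℂ) ww)-(U 0)^2*(U 4)*(C (R := ℂ) ww)-(U 0)^2*(U 3)*(U 1)*(C (R := ℂ) ww)+(U 0)^2*(U 3)*(U 1)*(U 4)*(C (R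 := ℂ) ww)) * hb1 +
    (-(U 4)+(U 4)*(C (R := ℂ) ww)+(U 1)-(U 1)*(C (R := ℂ) ww)+(U 1)*(U 4)-(U 1)*(U 4)*(C (R := ℂ) ww)-(U 1)^2+(U 1)^2*(C (R := ℂ) ww)+(U 3)-(U 3)*(C (R := ℂ) ww)-2*(U 3)*(U 1)+2*(U 3)*(U 1)*(C (R := ℂ) ww)+(U 3)*(U 1)^2-(U 3)*(U 1)^2*(C (R := ℂ) ww)-(U 0)+(U 0)*(C (R := ℂ) ww)+2*(U 0)*(U 4)-2*(U 0)*(U 4)*(C (R := ℂ) ww)-2*(U 0)*(U 1)*(U 4)+2*(U 0)*(U 1)*(U 4)*(C (R := ℂ) ww)+(U 0)*(U 1)^2-(U 0)*(U 1)^2*(C (R := ℂ) ww)-(U 0)*(U 3)+(U 0)*(U 3)*(C (R := ℂ) ww)+2*(U 0)*(U 3)*(U 1)-2*(U 0)*(U 3)*(U 1)*(C (R := ℂ) ww)-(U 0)*(U 3)*(U 1)^2+(U 0)*(U 3)*(U 1)^2*(C (R := ℂ) ww)+(U 0)^2-(U 0)^2*(C (R := ℂ) ww)-(U 0)^2*(U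 4)+(U 0)^2*(U 4)*(C (R := ℂ) ww)-(U 0)^2*(U 1)+(U 0)^2*(U 1)*(C (R := ℂ) ww)+(U 0)^2*(U 1)*(U 4)-(U 0)^2*(U 1)*(U 4)*(C (R := ℂ) ww)) * hb2 +
    (-(U 0)*(U 4)+(U 0)*(U 1)+(U 0)*(U 1)*(U 4)-(U 0)*(U 1)^2+(U 0)*(U 3)-2*(U 0)*(U 3)*(U 1)+(U 0)*(U 3)*(U 1)*(U 4)-(U 0)*(U 3)*(U 1)^2*(U 4)+(U 0)*(U 3)*(U 1)^3-(U 0)*(U 3)^2*(U 1)+2*(U 0)*(U 3)^2*(U 1)^2-(U 0)*(U 3)^2*(U 1)^3-(U 0)^2+(U 0)^2*(U 4)+(U 0)^2*(U 1)-(U 0)^2*(U 1)*(U 4)+(U 0)^2*(U 3)*(U 1)-(U 0)^2*(U 3)*(U 1)*(U 4)-(U 0)^2*(U 3)*(U 1)^2+(U 0)^2*(U 3)*(U 1)^2*(U 4)) * hb3 +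
    ((U 1)*(U 4)*(C (R := ℂ) ww)-(U 1)^2*(C (R := ℂ) ww)-(U 3)*(U 1)*(C (R := ℂ) ww)+(U 3)*(U 1)^2*(C (R := ℂ) ww)-(U 3)*(U 1)^2*(U 4)*(C (R := ℂ) ww)+(U 3)*(U 1)^3*(C (R := ℂ) ww)+(U 3)^2*(U 1)^2*(C (R := ℂ) ww)-(U 3)^2*(U 1)^3*(C (R := ℂ) ww)+(U 0)*(U 1)*(C (R := ℂ) ww)-2*(U 0)*(U 1)*(U 4)*(C (R := ℂ) ww)+(U 0)*(U 1)^2*(C (R := ℂ) ww)+(U 0)*(U 3)*(U 1)*(C (R := ℂ) ww)-2*(U 0)*(U 3)*(U 1)^2*(C (R := ℂ) ww)+2*(U 0)*(U 3)*(U 1)^2*(U 4)*(C (R := ℂ) ww)-(U 0)*(U 3)*(U 1)^3*(C (R := ℂ) ww)-(U 0)*(U 3)^2*(U 1)^2*(C (R := ℂ) ww)+(U 0)*(U 3)^2*(U 1)^3*(C (R := ℂ) ww)-(U 0)^2*(U 1)*(C (R := ℂ) ww)+(U 0)^2*(U 1)*(U 4)*(C (R := ℂ) ww)+(U 0)^2*(U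 3)*(U 1)^2*(C (R := ℂ) ww)-(U 0)^2*(U 3)*(U 1)^2*(U 4)*(C (R := ℂ) ww)) * hb4 +
    ((U 3)*(U 1)*(U 4)-(U 3)*(U 1)*(U 4)*(C (R := ℂ) ww)-(U 3)*(U 1)^2+(U 3)*(U 1)^2*(C (R := ℂ) ww)-(U 3)*(U 1)^2*(U 4)+(U 3)*(U 1)^2*(U 4)*(C (R := ℂ) ww)+(U 3)*(U 1)^3-(U 3)*(U 1)^3*(C (R := ℂ) ww)-(U 3)^2*(U 1)+(U 3)^2*(U 1)*(C (R := ℂ) ww)+2*(U 3)^2*(U 1)^2-2*(U 3)^2*(U 1)^2*(C (R := ℂ) ww)-(U 3)^2*(U 1)^3+(U 3)^2*(U 1)^3*(C (R := ℂ) ww)+(U 0)*(U 3)*(U 1)-(U 0)*(U 3)*(U 1)*(C (R := ℂ) ww)-2*(U 0)*(U 3)*(U 1)*(U 4)+2*(U 0)*(U 3)*(U 1)*(U 4)*(C (R := ℂ) ww)+2*(U 0)*(U 3)*(U 1)^2*(U 4)-2*(U 0)*(U 3)*(U 1)^2*(U 4)*(C (R := ℂ) ww)-(U 0)*(U 3)*(U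 1)^3+(U 0)*(U 3)*(U 1)^3*(C (R := ℂ) ww)+(U 0)*(U 3)^2*(U 1)-(U 0)*(U 3)^2*(U 1)*(C (R := ℂ) ww)-2*(U 0)*(U 3)^2*(U 1)^2+2*(U 0)*(U 3)^2*(U 1)^2*(C (R := ℂ) ww)+(U 0)*(U 3)^2*(U 1)^3-(U 0)*(U 3)^2*(U 1)^3*(C (R := ℂ) ww)-(U 0)^2*(U 3)*(U 1)+(U 0)^2*(U 3)*(U 1)*(C (R := ℂ) ww)+(U 0)^2*(U 3)*(U 1)*(U 4)-(U 0)^2*(U 3)*(U 1)*(U 4)*(C (R := ℂ) ww)+(U 0)^2*(U 3)*(U 1)^2-(U 0)^2*(U 3)*(U 1)^2*(C (R := ℂ) ww)-(U 0)^2*(U 3)*(U 1)^2*(U 4)+(U 0)^2*(U 3)*(U 1)^2*(U 4)*(C (R := ℂ) ww)) * hb5 +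
    ((Bs 5)-2*(X:ℂ⟦X⟧)-(C (R := ℂ) ww)*(Bs 5)+(C (R := ℂ) ww)*(Bs 4)-2*(C (R := ℂ) ww)*(X:ℂ⟦X⟧)+(U 4)*(Bs 3)-2*(U 1)*(Bs 5)-(U 1)*(Bs 3)+2*(U 1)*(C (R := ℂ) ww)*(Bs 5)-2*(U 1)*(C (R := ℂ) ww)*(Bs 4)+4*(U 1)*(C (R := ℂ) ww)*(X:ℂ⟦X⟧)-(U 1)*(U 4)*(Bs 5)-(U 1)*(U 4)*(Bs 3)-4*(U 1)*(U 4)*(X:ℂ⟦X⟧)+(U 1)*(U 4)*(C (R := ℂ) ww)*(Bs 5)+(U 1)*(U 4)*(C (R := ℂ) ww)*(Bs 4)+8*(U 1)*(U 4)*(C (R := ℂ) ww)*(X:ℂ⟦X⟧)-4*(U 1)*(U 4)*(C (R := ℂ) ww)^2*(X:ℂ⟦X⟧)-(U 1)*(U 4)^2*(Bs 5)+(U 1)*(U 4)^2*(C (R := ℂ) ww)*(Bs 5)+(U 1)^2*(Bs 5)+(U 1)^2*(Bs 3)+2*(U 1)^2*(X:ℂ⟦X⟧)-(U 1)^2*(C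 (R := ℂ) ww)*(Bs 5)-(U 1)^2*(C (R := ℂ) ww)*(Bs 4)-2*(U 1)^2*(C (R := ℂ) ww)*(X:ℂ⟦X⟧)+4*(U 1)^2*(C (R := ℂ) ww)^2*(X:ℂ⟦X⟧)+3*(U 1)^2*(U 4)*(Bs 5)+4*(U 1)^2*(U 4)*(X:ℂ⟦X⟧)-3*(U 1)^2*(U 4)*(C (R := ℂ) ww)*(Bs 5)+2*(U 1)^2*(U 4)*(C (R := ℂ) ww)*(Bs 4)-8*(U 1)^2*(U 4)*(C (R := ℂ) ww)*(X:ℂ⟦X⟧)+(U 1)^2*(U 4)^2*(Bs 5)-(U 1)^2*(U 4)^2*(C (R := ℂ) ww)*(Bs 5)-2*(U 1)^2*(U 4)^2*(C (R := ℂ) ww)*(Bs 4)-2*(U 1)^3*(U 4)*(Bs 5)+2*(U 1)^3*(U 4)*(C (R := ℂ) ww)*(Bs 5)+(U 1)^3*(U 4)*(C (R := ℂ) ww)*(Bs 4)-(U 3)*(Bs 3)+2*(U 3)*(U 1)*(Bs 3)+4*(U 3)*(U 1)*(X:ℂ⟦X⟧)-(U 3)*(U 1)*(C (R := ℂ) ww)*(Bs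 4)-2*(U 3)*(U 1)*(C (R := ℂ) ww)*(X:ℂ⟦X⟧)+2*(U 3)*(U 1)*(C (R := ℂ) ww)^2*(X:ℂ⟦X⟧)+(U 3)*(U 1)*(U 4)*(Bs 5)-(U 3)*(U 1)*(U 4)*(Bs 3)-(U 3)*(U 1)*(U 4)*(C (R := ℂ) ww)*(Bs 5)-6*(U 3)*(U 1)^2*(X:ℂ⟦X⟧)+(U 3)*(U 1)^2*(C (R := ℂ) ww)*(Bs 4)+2*(U 3)*(U 1)^2*(C (R := ℂ) ww)*(X:ℂ⟦X⟧)-2*(U 3)*(U 1)^2*(C (R := ℂ) ww)^2*(X:ℂ⟦X⟧)-2*(U 3)*(U 1)^2*(U 4)*(Bs 5)+(U 3)*(U 1)^2*(U 4)*(Bs 3)+2*(U 3)*(U 1)^2*(U 4)*(C (R := ℂ) ww)*(Bs 5)+(U 3)*(U 1)^2*(U 4)*(C (R := ℂ) ww)*(Bs 4)-(U 3)*(U 1)^3*(Bs 3)+2*(U 3)*(U 1)^3*(X:ℂ⟦X⟧)+(U 3)*(U 1)^3*(U 4)*(Bs 5)-(U 3)*(U 1)^3*(U 4)*(C (R :=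 ℂ) ww)*(Bs 5)-(U 3)*(U 1)^3*(U 4)*(C (R := ℂ) ww)*(Bs 4)+(U 3)^2*(U 1)*(Bs 3)-2*(U 3)^2*(U 1)^2*(Bs 3)+(U 3)^2*(U 1)^3*(Bs 3)+(U 0)*(Bs 3)-(U 0)*(U 4)*(Bs 3)-(U 0)*(U 1)*(Bs 3)+(U 0)*(U 1)*(C (R := ℂ) ww)*(Bs 4)+2*(U 0)*(U 1)*(C (R := ℂ) ww)*(X:ℂ⟦X⟧)-2*(U 0)*(U 1)*(C (R := ℂ) ww)^2*(X:ℂ⟦X⟧)-(U 0)*(U 1)*(U 4)*(Bs 5)+(U 0)*(U 1)*(U 4)*(Bs 3)+2*(U 0)*(U 1)*(U 4)*(X:ℂ⟦X⟧)+(U 0)*(U 1)*(U 4)*(C (R := ℂ) ww)*(Bs 5)-(U 0)*(U 1)*(U 4)*(C (R := ℂ) ww)*(Bs 4)-4*(U 0)*(U 1)*(U 4)*(C (R := ℂ) ww)*(X:ℂ⟦X⟧)+2*(U 0)*(U 1)*(U 4)*(C (R := ℂ) ww)^2*(X:ℂ⟦X⟧)+2*(U 0)*(U 1)*(U 4)^2*(Bs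 5)-2*(U 0)*(U 1)*(U 4)^2*(C (R := ℂ) ww)*(Bs 5)-2*(U 0)*(U 1)^2*(C (R := ℂ) ww)*(X:ℂ⟦X⟧)-2*(U 0)*(U 1)^2*(U 4)*(X:ℂ⟦X⟧)-(U 0)*(U 1)^2*(U 4)*(C (R := ℂ) ww)*(Bs 4)+4*(U 0)*(U 1)^2*(U 4)*(C (R := ℂ) ww)*(X:ℂ⟦X⟧)-2*(U 0)*(U 1)^2*(U 4)^2*(Bs 5)+2*(U 0)*(U 1)^2*(U 4)^2*(C (R := ℂ) ww)*(Bs 5)+(U 0)*(U 1)^2*(U 4)^2*(C (R := ℂ) ww)*(Bs 4)+(U 0)*(U 1)^3*(U 4)*(Bs 5)-(U 0)*(U 1)^3*(U 4)*(C (R := ℂ) ww)*(Bs 5)-(U 0)*(U 3)*(U 1)*(Bs 3)-(U 0)*(U 3)*(U 1)*(U 4)*(Bs 5)+(U 0)*(U 3)*(U 1)*(U 4)*(Bs 3)+(U 0)*(U 3)*(U 1)*(U 4)*(C (R := ℂ) ww)*(Bs 5)+(U 0)*(U 3)*(U 1)^2*(Bs 3)+2*(U 0)*(U 3)*(U 1)^2*(U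 4)*(Bs 5)-(U 0)*(U 3)*(U 1)^2*(U 4)*(Bs 3)-2*(U 0)*(U 3)*(U 1)^2*(U 4)*(C (R := ℂ) ww)*(Bs 5)-(U 0)*(U 3)*(U 1)^3*(U 4)*(Bs 5)+(U 0)*(U 3)*(U 1)^3*(U 4)*(C (R := ℂ) ww)*(Bs 5)+(U 0)^2*(U 1)*(U 4)*(Bs 5)-(U 0)^2*(U 1)*(U 4)*(C (R := ℂ) ww)*(Bs 5)-(U 0)^2*(U 1)*(U 4)^2*(Bs 5)+(U 0)^2*(U 1)*(U 4)^2*(C (R := ℂ) ww)*(Bs 5)-(U 0)^2*(U 1)^2*(U 4)*(Bs 5)+(U 0)^2*(U 1)^2*(U 4)*(C (R := ℂ) ww)*(Bs 5)+(U 0)^2*(U 1)^2*(U 4)^2*(Bs 5)-(U 0)^2*(U 1)^2*(U 4)^2*(C (R := ℂ) ww)*(Bs 5)) * hx +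
    (-(Bs 5)-4*(X:ℂ⟦X⟧)+(C (R := ℂ) ww)*(Bs 5)-(C (R := ℂ) ww)*(Bs 4)+8*(C (R := ℂ) ww)*(X:ℂ⟦X⟧)-6*(C (R := ℂ) ww)^2*(X:ℂ⟦X⟧)-(U 4)*(Bs 5)+(U 4)*(C (R := ℂ) ww)*(Bs 5)-(U 4)*(C (R := ℂ) ww)*(Bs 4)+3*(U 1)*(Bs 5)+4*(U 1)*(X:ℂ⟦X⟧)-3*(U 1)*(C (R := ℂ) ww)*(Bs 5)+3*(U 1)*(C (R := ℂ) ww)*(Bs 4)-8*(U 1)*(C (R := ℂ) ww)*(X:ℂ⟦X⟧)+(U 1)*(U 4)*(Bs 5)-(U 1)*(U 4)*(C (R := ℂ) ww)*(Bs 5)-2*(U 1)*(U 4)*(C (R := ℂ) ww)*(Bs 4)-2*(U 1)^2*(Bs 5)+2*(U 1)^2*(C (R := ℂ) ww)*(Bs 5)+(U 1)^2*(C (R := ℂ) ww)*(Bs 4)+(U 3)*(Bs 5)+2*(U 3)*(X:ℂ⟦X⟧)-(U 3)*(C (R := ℂ) ww)*(Bs 5)+(U 3)*(C (R := ℂ)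 ww)*(Bs 4)-4*(U 3)*(C (R := ℂ) ww)*(X:ℂ⟦X⟧)+2*(U 3)*(C (R := ℂ) ww)^2*(X:ℂ⟦X⟧)-2*(U 3)*(U 1)*(Bs 5)-2*(U 3)*(U 1)*(X:ℂ⟦X⟧)+2*(U 3)*(U 1)*(C (R := ℂ) ww)*(Bs 5)+4*(U 3)*(U 1)*(C (R := ℂ) ww)*(X:ℂ⟦X⟧)+(U 3)*(U 1)*(U 4)*(C (R := ℂ) ww)*(Bs 4)+(U 3)*(U 1)^2*(Bs 5)-(U 3)*(U 1)^2*(C (R := ℂ) ww)*(Bs 5)-2*(U 3)*(U 1)^2*(C (R := ℂ) ww)*(Bs 4)-(U 3)^2*(U 1)*(C (R := ℂ) ww)*(Bs 4)+(U 3)^2*(U 1)^2*(C (R := ℂ) ww)*(Bs 4)-(U 0)*(Bs 5)+2*(U 0)*(X:ℂ⟦X⟧)+(U 0)*(C (R := ℂ) ww)*(Bs 5)-(U 0)*(C (R := ℂ) ww)*(Bs 4)-4*(U 0)*(C (R := ℂ) ww)*(X:ℂ⟦X⟧)+6*(U 0)*(C (R := ℂ) ww)^2*(X:ℂ⟦X⟧)+2*(U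 0)*(U 4)*(Bs 5)-2*(U 0)*(U 4)*(C (R := ℂ) ww)*(Bs 5)+2*(U 0)*(U 4)*(C (R := ℂ) ww)*(Bs 4)-2*(U 0)*(U 1)*(X:ℂ⟦X⟧)-2*(U 0)*(U 1)*(C (R := ℂ) ww)*(Bs 4)+4*(U 0)*(U 1)*(C (R := ℂ) ww)*(X:ℂ⟦X⟧)-2*(U 0)*(U 1)*(U 4)*(Bs 5)+2*(U 0)*(U 1)*(U 4)*(C (R := ℂ) ww)*(Bs 5)+(U 0)*(U 1)*(U 4)*(C (R := ℂ) ww)*(Bs 4)+(U 0)*(U 1)^2*(Bs 5)-(U 0)*(U 1)^2*(C (R := ℂ) ww)*(Bs 5)+(U 0)^2*(Bs 5)-(U 0)^2*(C (R := ℂ) ww)*(Bs 5)+(U 0)^2*(C (R := ℂ) ww)*(Bs 4)-2*(U 0)^2*(C (R := ℂ) ww)^2*(X:ℂ⟦X⟧)-(U 0)^2*(U 4)*(Bs 5)+(U 0)^2*(U 4)*(C (R := ℂ) ww)*(Bs 5)-(U 0)^2*(U 4)*(C (R := ℂ) ww)*(Bs 4)-(U 0)^2*(U 1)*(Bs 5)+(U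 0)^2*(U 1)*(C (R := ℂ) ww)*(Bs 5)+(U 0)^2*(U 1)*(U 4)*(Bs 5)-(U 0)^2*(U 1)*(U 4)*(C (R := ℂ) ww)*(Bs 5)) * hy +
    (-6*(X:ℂ⟦X⟧)+6*(U 1)^2*(X:ℂ⟦X⟧)+2*(U 3)*(X:ℂ⟦X⟧)+4*(U 3)*(U 1)*(X:ℂ⟦X⟧)-6*(U 3)*(U 1)^2*(X:ℂ⟦X⟧)-2*(U 3)^2*(U 1)*(X:ℂ⟦X⟧)+2*(U 3)^2*(U 1)^2*(X:ℂ⟦X⟧)+6*(U 0)*(X:ℂ⟦X⟧)-4*(U 0)*(U 1)*(X:ℂ⟦X⟧)-2*(U 0)*(U 1)^2*(X:ℂ⟦X⟧)-2*(U 0)^2*(X:ℂ⟦X⟧)+2*(U 0)^2*(U 1)*(X:ℂ⟦X⟧)) * hw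

lemma e4 : ww^4 = -ww := by linear_combination (ww^2+ww)*hw2
lemma e6 : ww^6 = 1 := by linear_combination (ww^4+ww^3-ww-1)*hw2
lemma e8 : ww^8 = ww - 1 := by linear_combination (ww^6+ww^5-ww^3-ww^2+1)*hw2
lemma e9 : ww^9 = -1 := by linear_combination (ww^7+ww^6-ww^4-ww^3+ww+1)*hw2
lemma e10 : ww^10 = -ww := by linear_combination (ww^8+ww^7-ww^5-ww^4+ww^2+ww)*hw2
lemma e12 : ww^12 = 1 := by linear_combination (ww^10+ww^9-ww^7-ww^6+ww^4+ww^3-ww-1)*hw2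
lemma e15 : ww^15 = -1 := by
  linear_combination (ww^13+ww^12-ww^10-ww^9+ww^7+ww^6-ww^4-ww^3+ww+1)*hw2
lemma e16 : ww^16 = -ww := by
  linear_combination (ww^14+ww^13-ww^11-ww^10+ww^8+ww^7-ww^5-ww^4+ww^2+ww)*hw2
lemma e20 : ww^20 = ww - 1 := by
  linear_combination (ww^18+ww^17-ww^15-ww^14+ww^12+ww^11-ww^9-ww^8+ww^6+ww^5-ww^3-ww^2+1)*hw2

lemma br1 : ∑ i ∈ Finset.range 6, C (R := ℂ) (ww^(4*i)) * Bs i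
    = Bs 0 - C (R := ℂ) ww * Bs 1 + (C (R := ℂ) ww - 1) * Bs 2 + Bs 3 - C (R := ℂ) ww * Bs 4 + (C (R := ℂ) ww - 1) * Bs 5 := by
  simp only [Finset.sum_range_succ, Finset.sum_range_zero, zero_add]
  norm_num [e4, e8, e12, e16, e20]
  ring

lemma br3 : ∑ j ∈ Finset.range 6, C (R := ℂ) (ww^(3*j)) * U j
    = U 0 - U 1 + U 2 - U 3 + U 4 - U 5 := by
  simp only [Finset.sum_range_succ, Finset.sum_range_zero, zero_add]
  norm_num [hw3_s18, e6, e9, e12, e15]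
  ring

lemma br4 : ∑ j ∈ Finset.range 6, C (R := ℂ) (ww^(2*j)) * U j
    = U 0 + (C (R := ℂ) ww - 1) * U 1 - C (R := ℂ) ww * U 2 + U 3 + (C (R := ℂ) ww - 1) * U 4 - C (R := ℂ) ww * U 5 := by
  simp only [Finset.sum_range_succ, Finset.sum_range_zero, zero_add]
  norm_num [hw2, e4, e6, e8, e10]
  ring

lemma MI : (∑ i ∈ Finset.range 6, C (R := ℂ) (ww^(4*i)) * Bs i) *
      (∑ j ∈ Finset.range 6, C (R := ℂ) (ww^(3*j)) * U j)
    = 2 * X * ∑ j ∈ Finset.range 6, C (R := ℂ) (ww^(2*j)) * U j := by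
  rw [br1, br3, br4]; exact main

lemma coeffF (k : ℕ) : coeff (R := ℂ) k (∑ i ∈ Finset.range 6, C (R := ℂ) (ww^(4*i)) * Bs i)
    = (if (k+4) % 6 = 0 then (6:ℂ) else 0) * algebraMap ℚ ℂ (bernoulli k / (Nat.factorial k)) := by
  rw [map_sum, ← filt (k+4), Finset.sum_mul]
  refine Finset.sum_congr rfl fun i _ => ?_
  rw [← smul_eq_C_mul, coeff_smul, coeff_Bs, smul_eq_mul, ← mul_assoc, ← pow_add]
  congr 2
  ring

lemma coeffG (k : ℕ) : coeff (R := ℂ) k (∑ j ∈ Finset.range 6, C (R := ℂ) (ww^(3*j)) * U j)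
    = (if (k+3) % 6 = 0 then (6:ℂ) else 0) * algebraMap ℚ ℂ (1 / (Nat.factorial k)) := by
  rw [map_sum, ← filt (k+3), Finset.sum_mul]
  refine Finset.sum_congr rfl fun j _ => ?_
  rw [← smul_eq_C_mul, coeff_smul, coeff_U, smul_eq_mul, ← mul_assoc, ← pow_add]
  congr 2
  ring

lemma coeffS (k : ℕ) : coeff (R := ℂ) k (∑ j ∈ Finset.range 6, C (R := ℂ) (ww^(2*j)) * U j)
    = (if (k+2) % 6 = 0 then (6:ℂ) else 0) * algebraMap ℚ ℂ (1 / (Nat.factorial k)) := by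
  rw [map_sum, ← filt (k+2), Finset.sum_mul]
  refine Finset.sum_congr rfl fun j _ => ?_
  rw [← smul_eq_C_mul, coeff_smul, coeff_U, smul_eq_mul, ← mul_assoc, ← pow_add]
  congr 2
  ring

lemma complexId (n : ℕ) :
    ∑ i ∈ Finset.range (n+1),
      (36:ℂ) * algebraMap ℚ ℂ (bernoulli (6*i+2) / (Nat.factorial (6*i+2)))
        * algebraMap ℚ ℂ (1 / (Nat.factorial (6*n+5-(6*i+2))))
    = 12 * algebraMap ℚ ℂ (1 / (Nat.factorial (6*n+4))) := by
  have hite : ((6*n+4)+2) % 6 = 0 := by omega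
  have H := congrArg (coeff (R := ℂ) (6*n+5)) (MI)
  conv at H =>
    rw [mul_assoc, show ((2:ℂ⟦X⟧)) = C (R := ℂ) 2 from (map_ofNat _ 2).symm, ← smul_eq_C_mul,
      coeff_smul]
    rw [show (6*n+5) = (6*n+4)+1 by omega, coeff_succ_X_mul, coeffS, if_pos hite,
      smul_eq_mul]
  rw [PowerSeries.coeff_mul, Finset.Nat.sum_antidiagonal_eq_sum_range_succ_mk] at H
  dsimp only at H
  have key : ∀ k ∈ Finset.range (6*n+4+1+1),
      coeff (R := ℂ) k (∑ i ∈ Finset.range 6, C (R := ℂ) (ww^(4*i)) * Bs i) *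
        coeff (R := ℂ) ((6*n+4)+1-k) (∑ j ∈ Finset.range 6, C (R := ℂ) (ww^(3*j)) * U j)
      = if k % 6 = 2 then (36:ℂ) * algebraMap ℚ ℂ (bernoulli k / (Nat.factorial k))
          * algebraMap ℚ ℂ (1 / (Nat.factorial (6*n+5-k))) else 0 := by
    intro k hk
    rw [Finset.mem_range] at hk
    rw [coeffF, coeffG]
    have h5 : (6*n+4)+1-k = 6*n+5-k := by omega
    rw [h5]
    by_cases h : k % 6 = 2
    · rw [if_pos h, if_pos (by omega), if_pos (by omega : (6*n+5-k+3) % 6 = 0)]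
      ring
    · rw [if_neg h, if_neg (by omega)]
      ring
  rw [Finset.sum_congr rfl key, ← Finset.sum_filter] at H
  have himg : (Finset.range (6*n+4+1+1)).filter (fun k => k % 6 = 2)
      = (Finset.range (n+1)).image (fun i => 6*i+2) := by
    ext k
    simp only [Finset.mem_filter, Finset.mem_image, Finset.mem_range]
    constructor
    · rintro ⟨hk, hm⟩
      exact ⟨(k-2)/6, by omega, by omega⟩
    · rintro ⟨i, hi, rfl⟩
      omega
  rw [himg, Finset.sum_image (fun a _ b _ h => by omega)] at H
  rw [H]
  ring

lemma ratId (n : ℕ) :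
    ∑ i ∈ Finset.range (n+1), (36:ℚ) * (bernoulli (6*i+2) / (Nat.factorial (6*i+2)))
        * (1 / (Nat.factorial (6*n+5-(6*i+2))))
    = 12 * (1 / (Nat.factorial (6*n+4))) := by
  apply (algebraMap ℚ ℂ).injective
  rw [map_sum]
  simp only [map_mul, map_ofNat]
  exact complexId n

end LehmerAux

open LehmerAux in
theorem lehmer_recurrence_two (n : ℕ) :
    ∑ k ∈ Finset.range (n + 1), (Nat.choose (6 * n + 5) (6 * k + 2) : ℚ) * bernoulli (6 * k + 2) =
      (6 * n + 5) / 3 := by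
  have hQ := ratId n
  have key : ∀ k ∈ Finset.range (n+1),
      (Nat.choose (6*n+5) (6*k+2) : ℚ) * bernoulli (6*k+2)
      = ((Nat.factorial (6*n+5) : ℚ)/36) *
        ((36:ℚ) * (bernoulli (6*k+2) / (Nat.factorial (6*k+2)))
          * (1 / (Nat.factorial (6*n+5-(6*k+2))))) := by
    intro k hk
    rw [Finset.mem_range] at hk
    have hle : 6*k+2 ≤ 6*n+5 := by omega
    have hch := Nat.choose_mul_factorial_mul_factorial hle
    have hc : ((Nat.choose (6*n+5) (6*k+2) : ℚ) * Nat.factorial (6*k+2)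
        * Nat.factorial (6*n+5-(6*k+2))) = (Nat.factorial (6*n+5) : ℚ) := by
      exact_mod_cast congrArg (Nat.cast : ℕ → ℚ) hch
    have h1 : (Nat.factorial (6*k+2) : ℚ) ≠ 0 := by
      exact_mod_cast Nat.factorial_ne_zero _
    have h2 : (Nat.factorial (6*n+5-(6*k+2)) : ℚ) ≠ 0 := by
      exact_mod_cast Nat.factorial_ne_zero _
    field_simp
    linear_combination bernoulli (6*k+2) * hc
  rw [Finset.sum_congr rfl key, ← Finset.mul_sum, hQ]
  have hfac : (Nat.factorial (6*n+5) : ℚ) = (6*n+5) * Nat.factorial (6*n+4) := by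
    have h := Nat.factorial_succ (6*n+4)
    rw [show (6*n+4)+1 = 6*n+5 by omega] at h
    exact_mod_cast congrArg (Nat.cast : ℕ → ℚ) h
  have h3 : (Nat.factorial (6*n+4) : ℚ) ≠ 0 := by exact_mod_cast Nat.factorial_ne_zero _
  rw [hfac]
  field_simp
  ring
end
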